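/- arXiv:2312.15093 — 6 statements merged into one kernel-verified Lean document; each statement's English description precedes it below -/
import Mathlib

section
/- For any involution π in the symmetric group S_n, the quantity inv(π) + exc(π) is even, where inv(π) is the number of inversions of π and exc(π) is the number of excedances of π. -/
/-!
For an involution π, the map (i, j) ↦ (π j, π i) is an involution of the set of inversions.
Its fixed points are the pairs (i, π i) with i < π i, i.e. the excedances, and the remaining
inversions fall into two-element orbits. Hence inv(π) ≡ exc(π) (mod 2).
-/

open Finset Function

theorem Function.Involutive.even_card_filter_ne {α : Type*} [DecidableEq α] {f : α → α}
    (hf : Involutive f) {s : Finset α} (hs : ∀ a, f a ∈ s ↔ a ∈ s) :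
    Even #{a ∈ s | f a ≠ a} := by
  have hσ : (hf.toPerm f).subtypePerm hs ^ 2 = 1 := by
    ext x
    exact hf x
  have h2 := Equiv.Perm.two_dvd_card_support hσ
  rw [Equiv.Perm.support_subtypePerm (hf.toPerm f) hs, univ_eq_attach, filter_attach',
    card_map, card_attach] at h2
  exact even_iff_two_dvd.2 <| h2.trans <| dvd_of_eq <| congrArg card <|
    filter_congr fun x hx => by simp [hx]

namespace Equiv.Perm

variable {α : Type*} {π : Perm α}

variable (π) in
def transposePair (z : α × α) : α × α := (π z.2, π z.1)

theorem involutive_transposePair (hπ : Involutive π) : Involutive (transposePair π) := by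
  intro z
  simp [transposePair, hπ _]

theorem transposePair_eq_self_iff (hπ : Involutive π) {z : α × α} :
    transposePair π z = z ↔ π z.1 = z.2 := by
  simp only [transposePair, Prod.ext_iff]
  exact ⟨And.right, fun h => ⟨h ▸ hπ z.1, h⟩⟩

variable [Fintype α] [LinearOrder α]

variable (π) in
def inversions : Finset (α × α) := {z | z.1 < z.2 ∧ π z.2 < π z.1}

variable (π) in
def excedances : Finset α := {i | i < π i}

@[simp]
theorem mem_inversions {z : α × α} : z ∈ inversions π ↔ z.1 < z.2 ∧ π z.2 < π z.1 := by
  simp [inversions]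

@[simp]
theorem mem_excedances {i : α} : i ∈ excedances π ↔ i < π i := by
  simp [excedances]

theorem transposePair_mem_inversions_iff (hπ : Involutive π) {z : α × α} :
    transposePair π z ∈ inversions π ↔ z ∈ inversions π := by
  simp [transposePair, hπ _, and_comm]

theorem filter_transposePair_eq_self (hπ : Involutive π) :
    {z ∈ inversions π | transposePair π z = z} =
      (excedances π).map ⟨fun i => (i, π i), fun _ _ h => congrArg Prod.fst h⟩ := by
  ext ⟨i, _⟩
  simp only [mem_filter, mem_inversions, transposePair_eq_self_iff hπ, mem_map,
    mem_excedances]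
  constructor
  · rintro ⟨⟨hij, -⟩, rfl⟩
    exact ⟨i, hij, rfl⟩
  · rintro ⟨a, ha, ⟨⟩⟩
    exact ⟨⟨ha, by rwa [hπ]⟩, rfl⟩

theorem even_card_inversions_add_card_excedances (hπ : Involutive π) :
    Even (#(inversions π) + #(excedances π)) := by
  rw [← card_filter_add_card_filter_not (fun z => transposePair π z = z),
    filter_transposePair_eq_self hπ, card_map, add_right_comm, ← two_mul]
  exact (even_two_mul _).add <|
    (involutive_transposePair hπ).even_card_filter_ne fun _ => transposePair_mem_inversions_iff hπ

end Equiv.Perm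

/-- For an involution π in the symmetric group S_n, the quantity
inv(π) + exc(π) is even, where inv(π) is the number of inversions
(pairs (i,j) with i < j and π(i) > π(j)) and exc(π) is the number of
excedances (indices i with π(i) > i). -/
theorem inv_add_exc_even_of_involution (n : ℕ) (π : Equiv.Perm (Fin n))
    (hπ : π * π = 1) :
    Even ((Finset.univ.filter fun z : Fin n × Fin n =>
        z.1 < z.2 ∧ π z.2 < π z.1).card +
      (Finset.univ.filter fun i : Fin n => i < π i).card) :=
  Equiv.Perm.even_card_inversions_add_card_excedances fun x => congrArg (· x) hπ
end

section
/- For every (p,q)-clan γ, the length of γ equals the length of its underlying involution π_γ; that is, ℓ(γ) = (inv(π_γ) + exc(π_γ))/2, where ℓ(γ) = Σ_{c_i = c_j ∈ ℕ, i<j} ( j − i − #{a ∈ ℕ : c_s = c_t = a with s < i < t < j} ). -/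
open scoped Classical

noncomputable section

/-- The length of a clan `c : Fin n → Bool ⊕ ℕ` (where `Sum.inl` encodes the
signs `+`/`−` and `Sum.inr a` encodes the natural number `a`):
ℓ(γ) = Σ_{c_i = c_j ∈ ℕ, i<j} ( j − i − #{a ∈ ℕ : c_s = c_t = a, s < i < t < j} ).
Since each natural number appears exactly twice, the set of such `a` is
counted by the set of pairs of positions (s,t) with s < i < t < j and
c_s = c_t ∈ ℕ. -/
def clanLength {n : ℕ} (c : Fin n → Bool ⊕ ℕ) : ℕ :=
  ∑ z ∈ (Finset.univ.filter fun z : Fin n × Fin n =>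
      z.1 < z.2 ∧ ∃ a : ℕ, c z.1 = Sum.inr a ∧ c z.2 = Sum.inr a),
    ((z.2 : ℕ) - (z.1 : ℕ) -
      (Finset.univ.filter fun w : Fin n × Fin n =>
        w.1 < z.1 ∧ z.1 < w.2 ∧ w.2 < z.2 ∧
          ∃ a : ℕ, c w.1 = Sum.inr a ∧ c w.2 = Sum.inr a).card)

/-- The arcs of a clan. -/
def clanArcs {n : ℕ} (c : Fin n → Bool ⊕ ℕ) : Finset (Fin n × Fin n) :=
  Finset.univ.filter fun z : Fin n × Fin n =>
    z.1 < z.2 ∧ ∃ a : ℕ, c z.1 = Sum.inr a ∧ c z.2 = Sum.inr a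

/-- Auxiliary set `S1`. -/
def clanS1 {n : ℕ} (π : Equiv.Perm (Fin n)) (z : Fin n × Fin n) : Finset (Fin n) :=
  Finset.univ.filter fun y => z.1 < y ∧ z.1 ≤ π y ∧ π y < z.2

/-- Auxiliary set `S2`. -/
def clanS2 {n : ℕ} (π : Equiv.Perm (Fin n)) (z : Fin n × Fin n) : Finset (Fin n) :=
  Finset.univ.filter fun x => z.1 < x ∧ x < z.2 ∧ z.1 < π x

/-- Auxiliary set `T`. -/
def clanT {n : ℕ} (π : Equiv.Perm (Fin n)) (z : Fin n × Fin n) : Finset (Fin n) :=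
  Finset.univ.filter fun w => z.1 ≤ w ∧ w < z.2 ∧ z.1 < π w

/-- The inversions assigned to the arc `z`. -/
def clanP {n : ℕ} (π : Equiv.Perm (Fin n)) (z : Fin n × Fin n) :
    Finset (Fin n × Fin n) :=
  ((clanS1 π z).image fun y => (z.1, y)) ∪ ((clanS2 π z).image fun x => (x, z.2))

theorem clan_aux {n : ℕ} (c : Fin n → Bool ⊕ ℕ)
    (hpair : ∀ a : ℕ,
      (Finset.univ.filter fun i => c i = Sum.inr a).card = 0 ∨
      (Finset.univ.filter fun i => c i = Sum.inr a).card = 2)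
    (π : Equiv.Perm (Fin n))
    (hfix : ∀ i b, c i = Sum.inl b → π i = i)
    (hmatch : ∀ i j a, c i = Sum.inr a → c j = Sum.inr a → i ≠ j → π i = j) :
    2 * clanLength c =
      (Finset.univ.filter fun z : Fin n × Fin n =>
          z.1 < z.2 ∧ π z.2 < π z.1).card +
        (Finset.univ.filter fun i : Fin n => i < π i).card := by
  classical
  -- every non-fixed point is an endpoint of a matched pair
  have hnf : ∀ w : Fin n, π w ≠ w → ∃ a : ℕ, c w = Sum.inr a ∧ c (π w) = Sum.inr a := by
    intro w hw
    cases hcw : c w with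
    | inl b => exact absurd (hfix w b hcw) hw
    | inr a =>
      have hmem : w ∈ Finset.univ.filter fun i => c i = Sum.inr a := by
        simp [hcw]
      have h2 : (Finset.univ.filter fun i => c i = Sum.inr a).card = 2 := by
        rcases hpair a with h | h
        · rw [Finset.card_eq_zero] at h
          rw [h] at hmem
          exact absurd hmem (Finset.notMem_empty w)
        · exact h
      have hne : ((Finset.univ.filter fun i => c i = Sum.inr a).erase w).Nonempty := by
        rw [← Finset.card_pos, Finset.card_erase_of_mem hmem, h2]
        norm_num
      obtain ⟨w', hw'⟩ := hne
      have hw'ne : w' ≠ w := Finset.ne_of_mem_erase hw'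
      have hcw' : c w' = Sum.inr a :=
        (Finset.mem_filter.mp (Finset.mem_of_mem_erase hw')).2
      have hπw : π w = w' := hmatch w w' a hcw hcw' (Ne.symm hw'ne)
      exact ⟨a, rfl, by rw [hπw]; exact hcw'⟩
  have hinv2 : ∀ w : Fin n, π (π w) = w := by
    intro w
    by_cases hw : π w = w
    · rw [hw, hw]
    · obtain ⟨a, h1, h2⟩ := hnf w hw
      exact hmatch (π w) w a h2 h1 (fun h => hw h)
  have harc : ∀ z : Fin n × Fin n, z ∈ clanArcs c → π z.1 = z.2 ∧ π z.2 = z.1 := by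
    intro z hz
    rw [clanArcs, Finset.mem_filter] at hz
    obtain ⟨-, hlt, a, h1, h2⟩ := hz
    exact ⟨hmatch _ _ a h1 h2 (ne_of_lt hlt), hmatch _ _ a h2 h1 (ne_of_gt hlt)⟩
  have hlt12 : ∀ z : Fin n × Fin n, z ∈ clanArcs c → z.1 < z.2 := by
    intro z hz
    rw [clanArcs, Finset.mem_filter] at hz
    exact hz.2.1
  -- |S1 z| = |T z|
  have hS1T : ∀ z ∈ clanArcs c, (clanS1 π z).card = (clanT π z).card := by
    intro z _
    apply Finset.card_bij (fun y _ => π y)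
    · intro y hy
      rw [clanS1, Finset.mem_filter] at hy
      rw [clanT, Finset.mem_filter]
      refine ⟨Finset.mem_univ _, hy.2.2.1, hy.2.2.2, ?_⟩
      rw [hinv2]
      exact hy.2.1
    · intro y₁ _ y₂ _ h
      exact π.injective h
    · intro w hw
      rw [clanT, Finset.mem_filter] at hw
      refine ⟨π w, ?_, hinv2 w⟩
      rw [clanS1, Finset.mem_filter]
      refine ⟨Finset.mem_univ _, hw.2.2.2, ?_, ?_⟩
      · rw [hinv2]; exact hw.2.1
      · rw [hinv2]; exact hw.2.2.1
  -- |T z| = |S2 z| + 1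
  have hTS2 : ∀ z ∈ clanArcs c, (clanT π z).card = (clanS2 π z).card + 1 := by
    intro z hz
    have hz12 := hlt12 z hz
    have hπ1 := (harc z hz).1
    have hins : clanT π z = insert z.1 (clanS2 π z) := by
      ext w
      rw [clanT, clanS2, Finset.mem_insert, Finset.mem_filter, Finset.mem_filter]
      constructor
      · rintro ⟨-, h1, h2, h3⟩
        rcases eq_or_lt_of_le h1 with h | h
        · exact Or.inl h.symm
        · exact Or.inr ⟨Finset.mem_univ _, h, h2, h3⟩
      · rintro (rfl | ⟨-, h1, h2, h3⟩)
        · exact ⟨Finset.mem_univ _, le_refl _, hz12, by rw [hπ1]; exact hz12⟩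
        · exact ⟨Finset.mem_univ _, le_of_lt h1, h2, h3⟩
    rw [hins, Finset.card_insert_of_notMem]
    intro h
    rw [clanS2, Finset.mem_filter] at h
    exact lt_irrefl _ h.2.1
  -- |T z| = (z.2 - z.1) - crossLeft z
  have hTcard : ∀ z ∈ clanArcs c,
      (z.2 : ℕ) - (z.1 : ℕ) -
        (Finset.univ.filter fun w : Fin n × Fin n =>
          w.1 < z.1 ∧ z.1 < w.2 ∧ w.2 < z.2 ∧
            ∃ a : ℕ, c w.1 = Sum.inr a ∧ c w.2 = Sum.inr a).card
        = (clanT π z).card := by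
    intro z hz
    have hz12 := hlt12 z hz
    have hπ1 := (harc z hz).1
    have hπ2 := (harc z hz).2
    have hsplit :
        (clanT π z).card + ((Finset.Ico z.1 z.2).filter fun w => ¬ z.1 < π w).card
          = (z.2 : ℕ) - (z.1 : ℕ) := by
      have hT : clanT π z = (Finset.Ico z.1 z.2).filter fun w => z.1 < π w := by
        ext w
        rw [clanT, Finset.mem_filter, Finset.mem_filter, Finset.mem_Ico]
        constructor
        · rintro ⟨-, h1, h2, h3⟩; exact ⟨⟨h1, h2⟩, h3⟩
        · rintro ⟨⟨h1, h2⟩, h3⟩; exact ⟨Finset.mem_univ _, h1, h2, h3⟩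
      rw [hT, Finset.card_filter_add_card_filter_not, Fin.card_Ico]
    have hcross :
        ((Finset.Ico z.1 z.2).filter fun w => ¬ z.1 < π w).card
          = (Finset.univ.filter fun w : Fin n × Fin n =>
              w.1 < z.1 ∧ z.1 < w.2 ∧ w.2 < z.2 ∧
                ∃ a : ℕ, c w.1 = Sum.inr a ∧ c w.2 = Sum.inr a).card := by
      apply Finset.card_bij (fun w _ => ((π w, w) : Fin n × Fin n))
      · intro w hw
        rw [Finset.mem_filter, Finset.mem_Ico] at hw
        obtain ⟨⟨h1, h2⟩, h3⟩ := hw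
        rw [not_lt] at h3
        have hne1 : w ≠ z.1 := by
          intro h
          rw [h, hπ1] at h3
          exact absurd hz12 (not_lt.mpr h3)
        have hlt1 : z.1 < w := lt_of_le_of_ne h1 (Ne.symm hne1)
        have hπne : π w ≠ z.1 := by
          intro h
          have : w = z.2 := by
            have := congrArg π h
            rw [hinv2, hπ1] at this
            exact this
          rw [this] at h2
          exact lt_irrefl _ h2
        have hπlt : π w < z.1 := lt_of_le_of_ne h3 hπne
        have hwnf : π w ≠ w := fun h => absurd hlt1 (not_lt.mpr (h ▸ h3))
        obtain ⟨a, hcw, hcπw⟩ := hnf w hwnf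
        rw [Finset.mem_filter]
        exact ⟨Finset.mem_univ _, hπlt, hlt1, h2, a, hcπw, hcw⟩
      · intro w₁ _ w₂ _ h
        exact (Prod.mk.injEq _ _ _ _ ▸ h).2
      · intro u hu
        rw [Finset.mem_filter] at hu
        obtain ⟨-, h1, h2, h3, a, hc1, hc2⟩ := hu
        have hune : u.2 ≠ u.1 := ne_of_gt (lt_trans h1 h2)
        have hπu2 : π u.2 = u.1 := hmatch u.2 u.1 a hc2 hc1 hune
        refine ⟨u.2, ?_, ?_⟩
        · rw [Finset.mem_filter, Finset.mem_Ico]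
          refine ⟨⟨le_of_lt h2, h3⟩, ?_⟩
          rw [hπu2, not_lt]
          exact le_of_lt h1
        · rw [hπu2]
      -- done
    omega
  -- excedances = number of arcs
  have hexc : (clanArcs c).card
      = (Finset.univ.filter fun i : Fin n => i < π i).card := by
    apply Finset.card_bij (fun z _ => z.1)
    · intro z hz
      rw [Finset.mem_filter]
      refine ⟨Finset.mem_univ _, ?_⟩
      rw [(harc z hz).1]
      exact hlt12 z hz
    · intro z₁ hz₁ z₂ hz₂ h
      have h2 : z₁.2 = z₂.2 := by
        rw [← (harc z₁ hz₁).1, ← (harc z₂ hz₂).1, h]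
      exact Prod.ext h h2
    · intro i hi
      rw [Finset.mem_filter] at hi
      have hne : π i ≠ i := ne_of_gt hi.2
      obtain ⟨a, h1, h2⟩ := hnf i hne
      refine ⟨(i, π i), ?_, rfl⟩
      rw [clanArcs, Finset.mem_filter]
      exact ⟨Finset.mem_univ _, hi.2, a, h1, h2⟩
  -- |P z| = |S1 z| + |S2 z|
  have hPcard : ∀ z ∈ clanArcs c,
      (clanP π z).card = (clanS1 π z).card + (clanS2 π z).card := by
    intro z _
    have hinj1 : Function.Injective (fun y : Fin n => ((z.1, y) : Fin n × Fin n)) := by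
      intro y₁ y₂ h
      exact (Prod.mk.injEq _ _ _ _ ▸ h).2
    have hinj2 : Function.Injective (fun x : Fin n => ((x, z.2) : Fin n × Fin n)) := by
      intro x₁ x₂ h
      exact (Prod.mk.injEq _ _ _ _ ▸ h).1
    have hd : Disjoint ((clanS1 π z).image fun y => ((z.1, y) : Fin n × Fin n))
        ((clanS2 π z).image fun x => ((x, z.2) : Fin n × Fin n)) := by
      rw [Finset.disjoint_left]
      rintro u h1 h2
      obtain ⟨y, hy, rfl⟩ := Finset.mem_image.mp h1
      obtain ⟨x, hx, hxeq⟩ := Finset.mem_image.mp h2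
      rw [clanS2, Finset.mem_filter] at hx
      have hx1 : x = z.1 := (Prod.mk.injEq _ _ _ _ ▸ hxeq).1
      rw [hx1] at hx
      exact lt_irrefl _ hx.2.1
    rw [clanP, Finset.card_union_of_disjoint hd,
      Finset.card_image_of_injective _ hinj1, Finset.card_image_of_injective _ hinj2]
  -- the inversion set is the disjoint union of the P z
  have hcover : (Finset.univ.filter fun u : Fin n × Fin n =>
      u.1 < u.2 ∧ π u.2 < π u.1) = (clanArcs c).biUnion (clanP π) := by
    ext u
    rw [Finset.mem_filter, Finset.mem_biUnion]
    constructor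
    · rintro ⟨-, hlt, hqu⟩
      by_cases hx : u.1 ≤ π u.2
      · refine ⟨(u.1, π u.1), ?_, ?_⟩
        · have hne : π u.1 ≠ u.1 := by
            intro h
            rw [h] at hqu
            exact absurd hx (not_le.mpr hqu)
          obtain ⟨a, h1, h2⟩ := hnf u.1 hne
          rw [clanArcs, Finset.mem_filter]
          exact ⟨Finset.mem_univ _, lt_of_le_of_lt hx hqu, a, h1, h2⟩
        · rw [clanP]
          apply Finset.mem_union_left
          apply Finset.mem_image.mpr
          refine ⟨u.2, ?_, rfl⟩
          rw [clanS1, Finset.mem_filter]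
          exact ⟨Finset.mem_univ _, hlt, hx, hqu⟩
      · rw [not_le] at hx
        refine ⟨(π u.2, u.2), ?_, ?_⟩
        · have hne : π u.2 ≠ u.2 := ne_of_lt (lt_trans hx hlt)
          obtain ⟨a, h1, h2⟩ := hnf u.2 hne
          rw [clanArcs, Finset.mem_filter]
          exact ⟨Finset.mem_univ _, lt_trans hx hlt, a, h2, h1⟩
        · rw [clanP]
          apply Finset.mem_union_right
          apply Finset.mem_image.mpr
          refine ⟨u.1, ?_, rfl⟩
          rw [clanS2, Finset.mem_filter]
          exact ⟨Finset.mem_univ _, hx, hlt, hqu⟩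
    · rintro ⟨z, hz, hu⟩
      have hπ1 := (harc z hz).1
      have hπ2 := (harc z hz).2
      rw [clanP, Finset.mem_union] at hu
      rcases hu with h | h
      · obtain ⟨y, hy, rfl⟩ := Finset.mem_image.mp h
        rw [clanS1, Finset.mem_filter] at hy
        refine ⟨Finset.mem_univ _, hy.2.1, ?_⟩
        show π y < π z.1
        rw [hπ1]
        exact hy.2.2.2
      · obtain ⟨x, hx, rfl⟩ := Finset.mem_image.mp h
        rw [clanS2, Finset.mem_filter] at hx
        refine ⟨Finset.mem_univ _, hx.2.2.1, ?_⟩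
        show π z.2 < π x
        rw [hπ2]
        exact hx.2.2.2
  have hdisj : ∀ z₁ ∈ clanArcs c, ∀ z₂ ∈ clanArcs c, z₁ ≠ z₂ →
      Disjoint (clanP π z₁) (clanP π z₂) := by
    intro z₁ hz₁ z₂ hz₂ hne
    rw [Finset.disjoint_left]
    intro u h1 h2
    have key : ∀ zz, zz ∈ clanArcs c → u ∈ clanP π zz →
        (u.1 = zz.1 ∧ zz.1 ≤ π u.2) ∨ (u.2 = zz.2 ∧ zz.1 < u.1) := by
      intro zz hzz hu
      rw [clanP, Finset.mem_union] at hu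
      rcases hu with h | h
      · obtain ⟨y, hy, rfl⟩ := Finset.mem_image.mp h
        rw [clanS1, Finset.mem_filter] at hy
        exact Or.inl ⟨rfl, hy.2.2.1⟩
      · obtain ⟨x, hx, rfl⟩ := Finset.mem_image.mp h
        rw [clanS2, Finset.mem_filter] at hx
        exact Or.inr ⟨rfl, hx.2.1⟩
    rcases key z₁ hz₁ h1 with ⟨e1, f1⟩ | ⟨e1, f1⟩ <;>
      rcases key z₂ hz₂ h2 with ⟨e2, f2⟩ | ⟨e2, f2⟩
    · apply hne
      have h11 : z₁.1 = z₂.1 := by rw [← e1, ← e2]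
      exact Prod.ext h11 (by rw [← (harc z₁ hz₁).1, ← (harc z₂ hz₂).1, h11])
    · -- u.1 = z₁.1, z₁.1 ≤ π u.2, u.2 = z₂.2, z₂.1 < u.1
      rw [e2, (harc z₂ hz₂).2] at f1
      rw [e1] at f2
      exact absurd f2 (not_lt.mpr f1)
    · rw [e1, (harc z₁ hz₁).2] at f2
      rw [e2] at f1
      exact absurd f1 (not_lt.mpr f2)
    · apply hne
      have h22 : z₁.2 = z₂.2 := by rw [← e1, ← e2]
      exact Prod.ext (by rw [← (harc z₁ hz₁).2, ← (harc z₂ hz₂).2, h22]) h22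
  -- assemble
  have hclan : clanLength c = ∑ z ∈ clanArcs c, (clanT π z).card := by
    rw [clanLength]
    exact Finset.sum_congr rfl hTcard
  have hinvcard : (Finset.univ.filter fun u : Fin n × Fin n =>
      u.1 < u.2 ∧ π u.2 < π u.1).card
      = ∑ z ∈ clanArcs c, ((clanS1 π z).card + (clanS2 π z).card) := by
    rw [hcover, Finset.card_biUnion hdisj]
    exact Finset.sum_congr rfl hPcard
  rw [hclan, hinvcard, ← hexc, Finset.card_eq_sum_ones (clanArcs c), Finset.mul_sum,
    ← Finset.sum_add_distrib]
  apply Finset.sum_congr rfl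
  intro z hz
  have h1 := hS1T z hz
  have h2 := hTS2 z hz
  omega

/-- For every (p,q)-clan γ, the length of γ equals the length of its
underlying involution π_γ, that is ℓ(γ) = (inv(π_γ) + exc(π_γ))/2.  Here
the clan is a string of +, −, and natural numbers with each occurring natural
number appearing exactly twice and (#plus) − (#minus) = p − q; the underlying
involution fixes sign positions and swaps the two positions of each matched
pair of natural numbers. -/
theorem clan_length_eq_involution_length (p q : ℕ) (c : Fin (p + q) → Bool ⊕ ℕ)
    (hpair : ∀ a : ℕ,
      (Finset.univ.filter fun i => c i = Sum.inr a).card = 0 ∨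
      (Finset.univ.filter fun i => c i = Sum.inr a).card = 2)
    (hsign : ((Finset.univ.filter fun i => c i = Sum.inl true).card : ℤ) -
      (Finset.univ.filter fun i => c i = Sum.inl false).card = (p : ℤ) - q)
    (π : Equiv.Perm (Fin (p + q)))
    (hfix : ∀ i b, c i = Sum.inl b → π i = i)
    (hmatch : ∀ i j a, c i = Sum.inr a → c j = Sum.inr a → i ≠ j → π i = j) :
    clanLength c =
      ((Finset.univ.filter fun z : Fin (p + q) × Fin (p + q) =>
          z.1 < z.2 ∧ π z.2 < π z.1).card +
        (Finset.univ.filter fun i : Fin (p + q) => i < π i).card) / 2 := by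
  have h := clan_aux c hpair π hfix hmatch
  omega

end
end

section
/- The rook placements of shape λ, where λ is a partition fitting inside a p × q rectangle, are in bijection with the clans of the sect C_{p,q}^λ. Explicitly, given a clan γ in the sect with base clan τ_γ = τ_λ, listing the positions of − symbols of τ_γ as i_1 < ... < i_q and of + symbols as j_1 < ... < j_p, the map placing a rook in the box with northeast corner (k,l) for each matched pair c_{i_k} = c_{j_l} ∈ ℕ of γ is a bijection from C_{p,q}^λ to R(λ). -/
/-- A (p,q)-clan on `n = p+q` positions, modelled canonically as a pair of an
involution `π` of the positions (whose 2-cycles are the matched pairs of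
natural numbers) together with a sign function `s` (read only at fixed points
of `π`, normalised to `false` elsewhere): `true` = `+`, `false` = `−`. -/
def Clan (n : ℕ) :=
  {x : Equiv.Perm (Fin n) × (Fin n → Bool) //
    x.1 * x.1 = 1 ∧ ∀ i, x.1 i ≠ i → x.2 i = false}

/-- The base clan of a clan: each matched pair `c_i = c_j` (i < j) is replaced
by `−` at position i and `+` at position j; signs stay put.  It is a matchless
clan, i.e. a function `Fin n → Bool`. -/
def baseClan {n : ℕ} (γ : Clan n) : Fin n → Bool :=
  fun i => if i < γ.1.1 i then false else if γ.1.1 i < i then true else γ.1.2 i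

/-- The sect associated to a matchless clan `b`: all clans with base clan `b`. -/
def Sect {n : ℕ} (b : Fin n → Bool) := {γ : Clan n // baseClan γ = b}

/-- The position of the k-th minus sign of the matchless clan `b`. -/
noncomputable def minusPos {n q : ℕ} (b : Fin n → Bool)
    (h : (Finset.univ.filter fun i => b i = false).card = q) (k : Fin q) :
    Fin n :=
  ((Finset.univ.filter fun i => b i = false).orderIsoOfFin h k : Fin n)

/-- The position of the l-th plus sign of the matchless clan `b`. -/
noncomputable def plusPos {n p : ℕ} (b : Fin n → Bool)
    (h : (Finset.univ.filter fun i => b i = true).card = p) (l : Fin p) :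
    Fin n :=
  ((Finset.univ.filter fun i => b i = true).orderIsoOfFin h l : Fin n)

/-- The rook placement associated to a clan γ of the sect of `b`: a rook in
the box (k,l) for each matched pair `c_{i_k} = c_{j_l}`, where `i_k` is the
position of the k-th minus and `j_l` of the l-th plus of the base clan. -/
noncomputable def toRooks {p q : ℕ} (b : Fin (p + q) → Bool)
    (hbt : (Finset.univ.filter fun i => b i = true).card = p)
    (hbf : (Finset.univ.filter fun i => b i = false).card = q)
    (γ : Sect b) : Finset (Fin q × Fin p) :=
  Finset.univ.filter fun z =>
    γ.1.1.1 (minusPos b hbf z.1) = plusPos b hbt z.2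

section Aux
variable {n p q : ℕ}

lemma b_minusPos (b : Fin n → Bool)
    (h : (Finset.univ.filter fun i => b i = false).card = q) (k : Fin q) :
    b (minusPos b h k) = false :=
  (Finset.mem_filter.mp ((Finset.univ.filter fun i => b i = false).orderIsoOfFin h k).2).2

lemma b_plusPos (b : Fin n → Bool)
    (h : (Finset.univ.filter fun i => b i = true).card = p) (l : Fin p) :
    b (plusPos b h l) = true :=
  (Finset.mem_filter.mp ((Finset.univ.filter fun i => b i = true).orderIsoOfFin h l).2).2

lemma minusPos_inj (b : Fin n → Bool)
    (h : (Finset.univ.filter fun i => b i = false).card = q) {k k' : Fin q}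
    (hk : minusPos b h k = minusPos b h k') : k = k' :=
  ((Finset.univ.filter fun i => b i = false).orderIsoOfFin h).injective
    (Subtype.ext hk)

lemma plusPos_inj (b : Fin n → Bool)
    (h : (Finset.univ.filter fun i => b i = true).card = p) {l l' : Fin p}
    (hl : plusPos b h l = plusPos b h l') : l = l' :=
  ((Finset.univ.filter fun i => b i = true).orderIsoOfFin h).injective
    (Subtype.ext hl)

lemma minusPos_surj (b : Fin n → Bool)
    (h : (Finset.univ.filter fun i => b i = false).card = q) {i : Fin n}
    (hi : b i = false) : ∃ k, minusPos b h k = i := by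
  obtain ⟨k, hk⟩ := ((Finset.univ.filter fun i => b i = false).orderIsoOfFin h).surjective
    ⟨i, by simp [Finset.mem_filter, hi]⟩
  exact ⟨k, congrArg Subtype.val hk⟩

lemma plusPos_surj (b : Fin n → Bool)
    (h : (Finset.univ.filter fun i => b i = true).card = p) {i : Fin n}
    (hi : b i = true) : ∃ l, plusPos b h l = i := by
  obtain ⟨l, hl⟩ := ((Finset.univ.filter fun i => b i = true).orderIsoOfFin h).surjective
    ⟨i, by simp [Finset.mem_filter, hi]⟩
  exact ⟨l, congrArg Subtype.val hl⟩

lemma minusPos_ne_plusPos (b : Fin n → Bool)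
    (hf : (Finset.univ.filter fun i => b i = false).card = q)
    (ht : (Finset.univ.filter fun i => b i = true).card = p)
    (k : Fin q) (l : Fin p) : minusPos b hf k ≠ plusPos b ht l := by
  intro h
  have h1 := b_minusPos b hf k
  have h2 := b_plusPos b ht l
  rw [h, h2] at h1; simp at h1

lemma clan_invol (γ : Clan n) (i : Fin n) : γ.1.1 (γ.1.1 i) = i := by
  have h := γ.2.1
  calc γ.1.1 (γ.1.1 i) = (γ.1.1 * γ.1.1) i := rfl
  _ = i := by rw [h]; rfl

lemma clan_lt (γ : Clan n) (i : Fin n) (h : baseClan γ i = false)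
    (hne : γ.1.1 i ≠ i) : i < γ.1.1 i := by
  unfold baseClan at h
  rcases lt_trichotomy i (γ.1.1 i) with h1 | h1 | h1
  · exact h1
  · exact absurd h1.symm hne
  · simp [h1, not_lt_of_gt h1] at h

lemma clan_gt (γ : Clan n) (i : Fin n) (h : baseClan γ i = true)
    (hne : γ.1.1 i ≠ i) : γ.1.1 i < i := by
  unfold baseClan at h
  rcases lt_trichotomy i (γ.1.1 i) with h1 | h1 | h1
  · simp [h1] at h
  · exact absurd h1.symm hne
  · exact h1

lemma clan_fix (γ : Clan n) (i : Fin n) (hfix : γ.1.1 i = i) :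
    baseClan γ i = γ.1.2 i := by
  unfold baseClan; simp [hfix]

end Aux

section Rook
variable {p q : ℕ} (b : Fin (p + q) → Bool)
    (hbt : (Finset.univ.filter fun i => b i = true).card = p)
    (hbf : (Finset.univ.filter fun i => b i = false).card = q)
    (ρ : Finset (Fin q × Fin p))

open scoped Classical in
/-- The involution associated to a rook placement. -/
noncomputable def rookFun (i : Fin (p + q)) : Fin (p + q) :=
  if h1 : ∃ z ∈ ρ, minusPos b hbf z.1 = i then plusPos b hbt h1.choose.2
  else if h2 : ∃ z ∈ ρ, plusPos b hbt z.2 = i then minusPos b hbf h2.choose.1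
  else i

lemma rookFun_minus (hrow : ∀ z ∈ ρ, ∀ w ∈ ρ, z.1 = w.1 → z = w) {z : Fin q × Fin p} (hz : z ∈ ρ) :
    rookFun b hbt hbf ρ (minusPos b hbf z.1) = plusPos b hbt z.2 := by
  have h1 : ∃ w ∈ ρ, minusPos b hbf w.1 = minusPos b hbf z.1 := ⟨z, hz, rfl⟩
  rw [rookFun, dif_pos h1]
  have hspec := h1.choose_spec
  have : h1.choose = z :=
    hrow _ hspec.1 _ hz (minusPos_inj b hbf hspec.2)
  rw [this]

lemma rookFun_plus (hcol : ∀ z ∈ ρ, ∀ w ∈ ρ, z.2 = w.2 → z = w) {z : Fin q × Fin p} (hz : z ∈ ρ) :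
    rookFun b hbt hbf ρ (plusPos b hbt z.2) = minusPos b hbf z.1 := by
  have h1 : ¬ ∃ w ∈ ρ, minusPos b hbf w.1 = plusPos b hbt z.2 := by
    rintro ⟨w, -, hw⟩; exact minusPos_ne_plusPos b hbf hbt _ _ hw
  have h2 : ∃ w ∈ ρ, plusPos b hbt w.2 = plusPos b hbt z.2 := ⟨z, hz, rfl⟩
  rw [rookFun, dif_neg h1, dif_pos h2]
  have hspec := h2.choose_spec
  have : h2.choose = z :=
    hcol _ hspec.1 _ hz (plusPos_inj b hbt hspec.2)
  rw [this]

lemma rookFun_id {i : Fin (p + q)}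
    (h1 : ¬ ∃ z ∈ ρ, minusPos b hbf z.1 = i)
    (h2 : ¬ ∃ z ∈ ρ, plusPos b hbt z.2 = i) :
    rookFun b hbt hbf ρ i = i := by
  rw [rookFun, dif_neg h1, dif_neg h2]

lemma rookFun_invol (hrow : ∀ z ∈ ρ, ∀ w ∈ ρ, z.1 = w.1 → z = w) (hcol : ∀ z ∈ ρ, ∀ w ∈ ρ, z.2 = w.2 → z = w) (i : Fin (p + q)) :
    rookFun b hbt hbf ρ (rookFun b hbt hbf ρ i) = i := by
  by_cases h1 : ∃ z ∈ ρ, minusPos b hbf z.1 = i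
  · obtain ⟨z, hz, hzi⟩ := h1
    rw [← hzi, rookFun_minus b hbt hbf ρ hrow hz,
      rookFun_plus b hbt hbf ρ hcol hz]
  · by_cases h2 : ∃ z ∈ ρ, plusPos b hbt z.2 = i
    · obtain ⟨z, hz, hzi⟩ := h2
      rw [← hzi, rookFun_plus b hbt hbf ρ hcol hz,
        rookFun_minus b hbt hbf ρ hrow hz]
    · rw [rookFun_id b hbt hbf ρ h1 h2, rookFun_id b hbt hbf ρ h1 h2]

/-- The permutation associated to a rook placement. -/
noncomputable def rookPerm (hrow : ∀ z ∈ ρ, ∀ w ∈ ρ, z.1 = w.1 → z = w) (hcol : ∀ z ∈ ρ, ∀ w ∈ ρ, z.2 = w.2 → z = w) : Equiv.Perm (Fin (p + q)) :=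
  ⟨rookFun b hbt hbf ρ, rookFun b hbt hbf ρ,
    rookFun_invol b hbt hbf ρ hrow hcol, rookFun_invol b hbt hbf ρ hrow hcol⟩

lemma rookPerm_apply (i : Fin (p + q)) :
    rookPerm b hbt hbf ρ hrow hcol i = rookFun b hbt hbf ρ i := rfl

end Rook

/-- Proposition (bijection between a sect and rook placements of shape λ):
for a matchless clan `b` (equivalently, a partition λ inside the p × q
rectangle via the lattice-path correspondence), the map of `toRooks` sends
each clan of the sect of `b` to a rook placement of shape λ — the boxes (k,l)
of λ are exactly those with `i_k < j_l`, there is at most one rook per row and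
per column — and this map is a bijection onto the rook placements of shape λ. -/
theorem sect_bijects_with_rook_placements (p q : ℕ) (b : Fin (p + q) → Bool)
    (hbt : (Finset.univ.filter fun i => b i = true).card = p)
    (hbf : (Finset.univ.filter fun i => b i = false).card = q) :
    (∀ γ : Sect b,
      (∀ z ∈ toRooks b hbt hbf γ, minusPos b hbf z.1 < plusPos b hbt z.2) ∧
      (∀ z ∈ toRooks b hbt hbf γ, ∀ w ∈ toRooks b hbt hbf γ,
        z.1 = w.1 → z = w) ∧
      (∀ z ∈ toRooks b hbt hbf γ, ∀ w ∈ toRooks b hbt hbf γ,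
        z.2 = w.2 → z = w)) ∧
    (∀ ρ : Finset (Fin q × Fin p),
      (∀ z ∈ ρ, minusPos b hbf z.1 < plusPos b hbt z.2) →
      (∀ z ∈ ρ, ∀ w ∈ ρ, z.1 = w.1 → z = w) →
      (∀ z ∈ ρ, ∀ w ∈ ρ, z.2 = w.2 → z = w) →
      ∃! γ : Sect b, toRooks b hbt hbf γ = ρ) := by
  constructor
  · intro γ
    have key : ∀ z : Fin q × Fin p, z ∈ toRooks b hbt hbf γ →
        γ.1.1.1 (minusPos b hbf z.1) = plusPos b hbt z.2 := by
      intro z hz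
      simpa [toRooks] using hz
    refine ⟨?_, ?_, ?_⟩
    · intro z hz
      have h := key z hz
      have hne : γ.1.1.1 (minusPos b hbf z.1) ≠ minusPos b hbf z.1 := by
        rw [h]; intro he
        exact minusPos_ne_plusPos b hbf hbt z.1 z.2 he.symm
      have hlt := clan_lt γ.1 (minusPos b hbf z.1)
        ((congrFun γ.2 _).trans (b_minusPos b hbf z.1)) hne
      rwa [h] at hlt
    · intro z hz w hw h1
      have hz' := key z hz
      have hw' := key w hw
      rw [h1] at hz'
      rw [hz'] at hw'
      exact Prod.ext h1 (plusPos_inj b hbt hw')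
    · intro z hz w hw h2
      have hz' := key z hz
      have hw' := key w hw
      rw [h2, ← hw'] at hz'
      have := minusPos_inj b hbf (γ.1.1.1.injective hz')
      exact Prod.ext this h2
  · intro ρ hlt hrow hcol
    set f := rookFun b hbt hbf ρ with hfdef
    set π := rookPerm b hbt hbf ρ hrow hcol with hπdef
    set s : Fin (p + q) → Bool := fun i => if f i = i then b i else false with hsdef
    have hπf : ∀ i, π i = f i := fun i => rfl
    have hmul : π * π = 1 := by
      apply Equiv.ext
      intro i
      exact rookFun_invol b hbt hbf ρ hrow hcol i
    have hsign : ∀ i, π i ≠ i → s i = false := by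
      intro i hi
      exact if_neg hi
    set γ0 : Clan (p + q) := ⟨(π, s), hmul, hsign⟩ with hγ0def
    have hbase : baseClan γ0 = b := by
      funext i
      by_cases h1 : ∃ z ∈ ρ, minusPos b hbf z.1 = i
      · obtain ⟨z, hz, rfl⟩ := h1
        have hfz : γ0.1.1 (minusPos b hbf z.1) = plusPos b hbt z.2 :=
          rookFun_minus b hbt hbf ρ hrow hz
        unfold baseClan
        rw [hfz, if_pos (hlt z hz)]
        exact (b_minusPos b hbf z.1).symm
      · by_cases h2 : ∃ z ∈ ρ, plusPos b hbt z.2 = i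
        · obtain ⟨z, hz, rfl⟩ := h2
          have hfz : γ0.1.1 (plusPos b hbt z.2) = minusPos b hbf z.1 :=
            rookFun_plus b hbt hbf ρ hcol hz
          unfold baseClan
          rw [hfz, if_neg (not_lt_of_gt (hlt z hz)), if_pos (hlt z hz)]
          exact (b_plusPos b hbt z.2).symm
        · have hfix : γ0.1.1 i = i := rookFun_id b hbt hbf ρ h1 h2
          rw [clan_fix γ0 i hfix]
          exact if_pos hfix
    have htoR : toRooks b hbt hbf ⟨γ0, hbase⟩ = ρ := by
      ext z
      simp only [toRooks, Finset.mem_filter, Finset.mem_univ, true_and]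
      constructor
      · intro h
        by_cases h1 : ∃ w ∈ ρ, minusPos b hbf w.1 = minusPos b hbf z.1
        · obtain ⟨w, hw, hww⟩ := h1
          have h11 : w.1 = z.1 := minusPos_inj b hbf hww
          have hfw : γ0.1.1 (minusPos b hbf w.1) = plusPos b hbt w.2 :=
            rookFun_minus b hbt hbf ρ hrow hw
          rw [h11] at hfw
          rw [hfw] at h
          have h22 : w.2 = z.2 := plusPos_inj b hbt h
          have : w = z := Prod.ext h11 h22
          rwa [← this]
        · have h2 : ¬ ∃ w ∈ ρ, plusPos b hbt w.2 = minusPos b hbf z.1 := by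
            rintro ⟨w, -, hw⟩
            exact minusPos_ne_plusPos b hbf hbt z.1 w.2 hw.symm
          have hfix : γ0.1.1 (minusPos b hbf z.1) = minusPos b hbf z.1 :=
            rookFun_id b hbt hbf ρ h1 h2
          rw [hfix] at h
          exact absurd h (minusPos_ne_plusPos b hbf hbt z.1 z.2)
      · intro hz
        exact rookFun_minus b hbt hbf ρ hrow hz
    refine ⟨⟨γ0, hbase⟩, htoR, ?_⟩
    intro γ' hγ'
    have hmemiff : ∀ z : Fin q × Fin p,
        γ'.1.1.1 (minusPos b hbf z.1) = plusPos b hbt z.2 ↔ z ∈ ρ := by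
      intro z
      rw [← hγ']
      simp [toRooks]
    have hπeq : ∀ i, γ'.1.1.1 i = f i := by
      intro i
      by_cases h1 : ∃ z ∈ ρ, minusPos b hbf z.1 = i
      · obtain ⟨z, hz, rfl⟩ := h1
        rw [(hmemiff z).mpr hz]
        exact (rookFun_minus b hbt hbf ρ hrow hz).symm
      · by_cases h2 : ∃ z ∈ ρ, plusPos b hbt z.2 = i
        · obtain ⟨z, hz, rfl⟩ := h2
          have hm := (hmemiff z).mpr hz
          have : γ'.1.1.1 (plusPos b hbt z.2) = minusPos b hbf z.1 := by
            rw [← hm, clan_invol γ'.1]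
          rw [this]
          exact (rookFun_plus b hbt hbf ρ hcol hz).symm
        · have hfix : γ'.1.1.1 i = i := by
            by_contra hne
            cases hbi : b i with
            | false =>
              have hlt2 : i < γ'.1.1.1 i :=
                clan_lt γ'.1 i ((congrFun γ'.2 i).trans hbi) hne
              have hbpi : b (γ'.1.1.1 i) = true := by
                rw [← congrFun γ'.2 (γ'.1.1.1 i)]
                unfold baseClan
                rw [clan_invol γ'.1 i, if_neg (not_lt_of_gt hlt2),
                  if_pos hlt2]
              obtain ⟨l, hl⟩ := plusPos_surj b hbt hbpi
              obtain ⟨k, hk⟩ := minusPos_surj b hbf hbi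
              have : ((k, l) : Fin q × Fin p) ∈ ρ := by
                rw [← hmemiff]
                show γ'.1.1.1 (minusPos b hbf k) = plusPos b hbt l
                rw [hk, hl]
              exact h1 ⟨(k, l), this, hk⟩
            | true =>
              have hgt : γ'.1.1.1 i < i :=
                clan_gt γ'.1 i ((congrFun γ'.2 i).trans hbi) hne
              have hbpi : b (γ'.1.1.1 i) = false := by
                rw [← congrFun γ'.2 (γ'.1.1.1 i)]
                unfold baseClan
                rw [clan_invol γ'.1 i, if_pos hgt]
              obtain ⟨k, hk⟩ := minusPos_surj b hbf hbpi
              obtain ⟨l, hl⟩ := plusPos_surj b hbt hbi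
              have : ((k, l) : Fin q × Fin p) ∈ ρ := by
                rw [← hmemiff]
                show γ'.1.1.1 (minusPos b hbf k) = plusPos b hbt l
                rw [hk, hl, clan_invol γ'.1 i]
              exact h2 ⟨(k, l), this, hl⟩
          rw [hfix]
          exact (rookFun_id b hbt hbf ρ h1 h2).symm
    have hπ' : γ'.1.1.1 = π := by
      apply Equiv.ext
      intro i
      rw [hπeq i]
      exact (hπf i).symm
    have hs' : γ'.1.1.2 = s := by
      funext i
      by_cases hfix : γ'.1.1.1 i = i
      · have hffix : f i = i := by rw [← hπeq i, hfix]
        have h1 : γ'.1.1.2 i = b i := by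
          rw [← clan_fix γ'.1 i hfix, congrFun γ'.2 i]
        rw [h1]
        exact (if_pos hffix).symm
      · have hffix : f i ≠ i := by rw [← hπeq i]; exact hfix
        rw [γ'.1.2.2 i hfix]
        exact (if_neg hffix).symm
    apply Subtype.ext
    apply Subtype.ext
    exact Prod.ext hπ' hs'
end

section
/- Antisymmetry of the rank-tableau order on rook placements: if ρ and π are rook placements of the same shape λ with rt_ρ(x) = rt_π(x) for all boxes x of λ, then ρ = π. -/
/-- Rook placements of shape λ, where λ is given by its row lengths
`lam : Fin q → ℕ` (a partition, i.e. antitone): sets of boxes (a,b) of the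
Young diagram (row `a`, column `b`, with `b < lam a`) with at most one box per
row and per column. -/
def RookPlacement {q : ℕ} (lam : Fin q → ℕ) :=
  {s : Finset (Fin q × ℕ) //
    (∀ z ∈ s, z.2 < lam z.1) ∧
    (∀ z ∈ s, ∀ w ∈ s, z.1 = w.1 → z = w) ∧
    (∀ z ∈ s, ∀ w ∈ s, z.2 = w.2 → z = w)}

/-- The rank tableau value of a placement at the box (a,b): the number of
rooks in positions (a',b') with a' ≤ a and b' ≤ b (weakly northwest of (a,b)). -/
def rankTab {q : ℕ} {lam : Fin q → ℕ} (ρ : RookPlacement lam)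
    (a : Fin q) (b : ℕ) : ℕ :=
  (ρ.1.filter fun z => z.1 ≤ a ∧ z.2 ≤ b).card

/-- Strict-corner counting function. -/
def Fcount {q : ℕ} {lam : Fin q → ℕ} (ρ : RookPlacement lam) (A B : ℕ) : ℕ :=
  (ρ.1.filter fun z => (z.1 : ℕ) < A ∧ z.2 < B).card

lemma rankTab_eq_F {q : ℕ} {lam : Fin q → ℕ} (ρ : RookPlacement lam)
    (a : Fin q) (b : ℕ) : rankTab ρ a b = Fcount ρ (a.1 + 1) (b + 1) := by
  unfold rankTab Fcount
  congr 1
  apply Finset.filter_congr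
  intro z _
  simp only [Fin.le_def]
  omega

lemma key {q : ℕ} {lam : Fin q → ℕ} (ρ : RookPlacement lam) (a : Fin q) (b : ℕ) :
    Fcount ρ (a.1 + 1) (b + 1) + Fcount ρ a.1 b
      = Fcount ρ a.1 (b + 1) + Fcount ρ (a.1 + 1) b
        + (if (a, b) ∈ ρ.1 then 1 else 0) := by
  classical
  have hmem : (if (a, b) ∈ ρ.1 then 1 else 0)
      = ∑ z ∈ ρ.1, if z = (a, b) then 1 else 0 := by
    rw [Finset.sum_ite_eq' ρ.1 (a, b) (fun _ => 1)]
  simp only [Fcount, Finset.card_filter, hmem, ← Finset.sum_add_distrib]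
  apply Finset.sum_congr rfl
  intro z _
  have hz1 : (z = (a, b)) ↔ ((z.1 : ℕ) = (a : ℕ) ∧ z.2 = b) := by
    constructor
    · rintro rfl; exact ⟨rfl, rfl⟩
    · rintro ⟨h1, h2⟩; exact Prod.ext (Fin.ext h1) h2
  rw [if_congr hz1 rfl rfl]
  split_ifs <;> omega

lemma mem_of {q : ℕ} (lam : Fin q → ℕ) (hlam : Antitone lam)
    (ρ π : RookPlacement lam)
    (h : ∀ a : Fin q, ∀ b : ℕ, b < lam a → rankTab ρ a b = rankTab π a b) :
    ∀ z ∈ ρ.1, z ∈ π.1 := by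
  intro z hz
  obtain ⟨a, b⟩ := z
  have hb : b < lam a := ρ.2.1 _ hz
  -- equality of Fcount at the relevant corners
  have hF : ∀ A B, A ≤ (a : ℕ) + 1 → B ≤ b + 1 → Fcount ρ A B = Fcount π A B := by
    intro A B hA hB
    match A, B with
    | 0, B =>
        simp [Fcount]
    | A + 1, 0 =>
        simp [Fcount]
    | A + 1, B + 1 =>
        have hAq : A < q := lt_of_le_of_lt (by omega : A ≤ (a : ℕ)) a.2
        set a' : Fin q := ⟨A, hAq⟩
        have ha' : a' ≤ a := by simp [a', Fin.le_def]; omega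
        have hBlam : B < lam a' := lt_of_lt_of_le (by omega : B < lam a) (hlam ha')
        have := h a' B hBlam
        rwa [rankTab_eq_F, rankTab_eq_F] at this
  have k1 := key ρ a b
  have k2 := key π a b
  rw [hF _ _ le_rfl le_rfl, hF _ _ (by omega) le_rfl, hF _ _ le_rfl (by omega),
    hF _ _ (by omega) (by omega)] at k1
  rw [if_pos hz] at k1
  by_cases hmem : (a, b) ∈ π.1
  · exact hmem
  · rw [if_neg hmem] at k2
    omega

/-- Antisymmetry of the rank-tableau order: if two rook placements of the same
partition shape λ have equal rank tableaux at all boxes of λ, they are equal. -/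
theorem rank_tableau_antisymm {q : ℕ} (lam : Fin q → ℕ) (hlam : Antitone lam)
    (ρ π : RookPlacement lam)
    (h : ∀ a : Fin q, ∀ b : ℕ, b < lam a → rankTab ρ a b = rankTab π a b) :
    ρ = π := by
  apply Subtype.ext
  apply Finset.ext
  intro z
  constructor
  · exact mem_of lam hlam ρ π h z
  · exact mem_of lam hlam π ρ (fun a b hb => (h a b hb).symm) z
end

section
/- If γ ⋖ τ is a covering relation in the Bruhat order restricted to a sect C_{p,q}^λ (equivalently, in the rank-tableau order on rook placements of shape λ), then the base clans agree: τ_γ = τ_τ, and τ is obtained from γ by one of the following pattern replacements applied at a free rise: (1) replacing a pattern −+ by a matched pair 11; (2) replacing −11 by 1−1 where the first 1 of the source is an excedance position; (3) replacing 11+ by 1+1; (4) replacing 1212 by 1221; (5) replacing 1122 by 1+−1. -/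
/-- The rank-tableau value of the rook placement of a sect clan at the
box (k,l): the number of matched pairs (k',l') with k' ≤ k and l' ≥ l
(rooks weakly northwest of the box in the drawn diagram). -/
noncomputable def sectRank {p q : ℕ} (b : Fin (p + q) → Bool)
    (hbt : (Finset.univ.filter fun i => b i = true).card = p)
    (hbf : (Finset.univ.filter fun i => b i = false).card = q)
    (γ : Sect b) (k : Fin q) (l : Fin p) : ℕ :=
  (Finset.univ.filter fun z : Fin q × Fin p =>
    γ.1.1.1 (minusPos b hbf z.1) = plusPos b hbt z.2 ∧ z.1 ≤ k ∧ l ≤ z.2).card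

/-- The Bruhat order on the sect, via the rank-tableau order on the rook
placements of shape λ (the boxes (k,l) of λ being those with i_k < j_l). -/
noncomputable def sectLe {p q : ℕ} (b : Fin (p + q) → Bool)
    (hbt : (Finset.univ.filter fun i => b i = true).card = p)
    (hbf : (Finset.univ.filter fun i => b i = false).card = q)
    (γ τ : Sect b) : Prop :=
  ∀ k : Fin q, ∀ l : Fin p, minusPos b hbf k < plusPos b hbt l →
    sectRank b hbt hbf γ k l ≤ sectRank b hbt hbf τ k l

/-- A free rise (i,j) of an involution π. -/
def FreeRise {n : ℕ} (π : Equiv.Perm (Fin n)) (i j : Fin n) : Prop :=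
  i < j ∧ π i < π j ∧ ∀ k, i < k → k < j → ¬ (π i < π k ∧ π k < π j)

/-- Move (1): replacing a pattern −+ (two fixed points) by a matched pair 11,
at a free rise. -/
def Move1 {n : ℕ} (γ τ : Clan n) : Prop :=
  ∃ i j : Fin n, i < j ∧ γ.1.1 i = i ∧ γ.1.1 j = j ∧
    γ.1.2 i = false ∧ γ.1.2 j = true ∧ FreeRise γ.1.1 i j ∧
    τ.1.1 = γ.1.1 * Equiv.swap i j ∧
    (∀ x, x ≠ i → x ≠ j → τ.1.2 x = γ.1.2 x)

/-- Move (2): replacing −11 by 1−1 (fe-rise at a − sign at position i and the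
excedance k of the pair (k, π k)), at the free rise (i,k). -/
def Move2 {n : ℕ} (γ τ : Clan n) : Prop :=
  ∃ i k : Fin n, i < k ∧ γ.1.1 i = i ∧ γ.1.2 i = false ∧ k < γ.1.1 k ∧
    FreeRise γ.1.1 i k ∧
    τ.1.1 = Equiv.swap i k * γ.1.1 * Equiv.swap i k ∧
    τ.1.2 k = false ∧ (∀ x, x ≠ i → x ≠ k → τ.1.2 x = γ.1.2 x)

/-- Move (3): replacing 11+ by 1+1 (ef-rise at the excedance k of the pair
(k, π k) and a + sign at position j), at the free rise (k,j). -/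
def Move3 {n : ℕ} (γ τ : Clan n) : Prop :=
  ∃ k j : Fin n, k < γ.1.1 k ∧ γ.1.1 k < j ∧ γ.1.1 j = j ∧ γ.1.2 j = true ∧
    FreeRise γ.1.1 k j ∧
    τ.1.1 = Equiv.swap (γ.1.1 k) j * γ.1.1 * Equiv.swap (γ.1.1 k) j ∧
    τ.1.2 (γ.1.1 k) = true ∧ (∀ x, x ≠ γ.1.1 k → x ≠ j → τ.1.2 x = γ.1.2 x)

/-- Move (4): replacing 1212 by 1221 (non-crossing ee-rise), at the free rise
(k₁,k₂), where k₁ < k₂ < π k₁ < π k₂. -/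
def Move4 {n : ℕ} (γ τ : Clan n) : Prop :=
  ∃ k₁ k₂ : Fin n, k₁ < k₂ ∧ k₂ < γ.1.1 k₁ ∧ γ.1.1 k₁ < γ.1.1 k₂ ∧
    FreeRise γ.1.1 k₁ k₂ ∧
    τ.1.1 = Equiv.swap (γ.1.1 k₁) (γ.1.1 k₂) * γ.1.1 *
      Equiv.swap (γ.1.1 k₁) (γ.1.1 k₂) ∧
    (∀ x, τ.1.2 x = γ.1.2 x)

/-- Move (5): replacing 1122 by 1+−1 (crossing ee-rise), at the free rise
(k₁,k₂), where k₁ < π k₁ < k₂ < π k₂; the new pair is (k₁, π k₂), with + at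
π k₁ and − at k₂. -/
def Move5 {n : ℕ} (γ τ : Clan n) : Prop :=
  ∃ k₁ k₂ : Fin n, k₁ < γ.1.1 k₁ ∧ γ.1.1 k₁ < k₂ ∧ k₂ < γ.1.1 k₂ ∧
    FreeRise γ.1.1 k₁ k₂ ∧
    τ.1.1 = γ.1.1 * Equiv.swap k₁ (γ.1.1 k₁) * Equiv.swap k₂ (γ.1.1 k₂) *
      Equiv.swap k₁ (γ.1.1 k₂) ∧
    τ.1.2 (γ.1.1 k₁) = true ∧ τ.1.2 k₂ = false ∧
    (∀ x, x ≠ γ.1.1 k₁ → x ≠ k₂ → τ.1.2 x = γ.1.2 x)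

/-!
Both orders are read off the rank function `r π a y = #{i < a | y ≤ π i}`: for `a ≤ y` it
counts the arcs of the involution `π` from the first `a` positions to the positions `≥ y`,
which are the entries of the rank tableau. Let `P`, `Q` be the involutions of `γ < τ`. At the
first position `x` where they differ, `x` opens an arc of `Q` and `r P < r Q` along the first
row of the rectangle spanned by `(x, Q x)`; following arcs of `P` inward shrinks this to a pair
`(h, d)` with `r P < r Q` on its whole rectangle `(h, P d] × (P h, d]`, and such a pair with
`d - h` minimal is a free rise `(h, P d)`. Matching `h` with `d` (and `P h` with `P d` when
`P d < P h`) gives a clan `σ` of the same sect with `r σ = r P + 1` exactly on that rectangle,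
so `γ < σ ≤ τ` and the covering forces `σ = τ`. The five moves are the five shapes of
`(h, d)`: fixed point or arc at either end, and the order of `P h` and `P d` when both are arcs.
-/

namespace BruhatSect

open Finset Function Equiv

variable {n : ℕ}

/-- Rows are counted strictly (`i < a`), so the row index `a = minusPos k + 1` matches the
rank-tableau box `(k, l)`; see `sectRank_eq_cornerRank`. -/
def cornerRank (f : Fin n → Fin n) (a y : ℕ) : ℕ := #{i : Fin n | (i : ℕ) < a ∧ y ≤ f i}

lemma cornerRank_add (f : Fin n → Fin n) {a a' : ℕ} (h : a ≤ a') (y : ℕ) :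
    cornerRank f a' y =
      cornerRank f a y + #{i : Fin n | a ≤ (i : ℕ) ∧ (i : ℕ) < a' ∧ y ≤ f i} := by
  rw [cornerRank, cornerRank, ← card_union_of_disjoint]
  · congr 1
    ext i
    simp only [mem_filter, mem_univ, true_and, mem_union]
    omega
  · exact disjoint_filter.mpr fun i _ h₁ h₂ => by omega

lemma cornerRank_succ (f : Fin n → Fin n) (x : Fin n) (y : ℕ) :
    cornerRank f (x + 1) y = cornerRank f x y + if y ≤ f x then 1 else 0 := by
  rw [cornerRank_add f (Nat.le_succ x)]
  have hrow : #{i : Fin n | (x : ℕ) ≤ i ∧ (i : ℕ) < x + 1 ∧ y ≤ f i} =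
      #(({x} : Finset (Fin n)).filter fun i => y ≤ f i) := by
    congr 1
    ext i
    simp only [mem_filter, mem_univ, true_and, mem_singleton, Fin.ext_iff]
    constructor
    · rintro ⟨h₁, h₂, h₃⟩
      exact ⟨by omega, h₃⟩
    · rintro ⟨h₁, h₂⟩
      exact ⟨h₁.ge, by omega, h₂⟩
  rw [hrow, filter_singleton]
  split_ifs <;> simp

lemma cornerRank_congr {f g : Fin n → Fin n} {a : ℕ}
    (hfg : ∀ i : Fin n, (i : ℕ) < a → f i = g i) (y : ℕ) :
    cornerRank f a y = cornerRank g a y := by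
  unfold cornerRank
  congr 1
  ext i
  simp only [mem_filter, mem_univ, true_and]
  exact and_congr_right fun hi => by rw [hfg i hi]

def SignCompat (b : Fin n → Bool) (π : Fin n → Fin n) : Prop :=
  ∀ i, (i < π i → b i = false) ∧ (π i < i → b i = true)

section SignCompat

variable {b : Fin n → Bool} {π : Fin n → Fin n}

lemma SignCompat.le_apply (hb : SignCompat b π) {i : Fin n} (hi : b i = false) : i ≤ π i :=
  not_lt.mp fun h => by simp [(hb i).2 h] at hi

lemma SignCompat.apply_le (hb : SignCompat b π) {i : Fin n} (hi : b i = true) : π i ≤ i :=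
  not_lt.mp fun h => by simp [(hb i).1 h] at hi

lemma SignCompat.apply_eq_true (hb : SignCompat b π) (hπ : Involutive π) {i : Fin n}
    (hi : i < π i) : b (π i) = true :=
  (hb (π i)).2 (by rwa [hπ i])

lemma SignCompat.apply_eq_false (hb : SignCompat b π) (hπ : Involutive π) {i : Fin n}
    (hi : π i < i) : b (π i) = false :=
  (hb (π i)).1 (by rwa [hπ i])

end SignCompat

def Admissible (b : Fin n → Bool) (π : Fin n → Fin n) (h d : Fin n) : Prop :=
  b h = false ∧ b d = true ∧ π h < d ∧ h < π d

lemma Admissible.lt {b : Fin n → Bool} {π : Fin n → Fin n} {h d : Fin n}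
    (hb : SignCompat b π) (hadm : Admissible b π h d) : h < d :=
  hadm.2.2.2.trans_le (hb.apply_le hadm.2.1)

def InRect (π : Fin n → Fin n) (h d : Fin n) (a y : ℕ) : Prop :=
  (h : ℕ) < a ∧ a ≤ π d ∧ (π h : ℕ) < y ∧ y ≤ d

instance (π : Fin n → Fin n) (h d : Fin n) (a y : ℕ) : Decidable (InRect π h d a y) :=
  inferInstanceAs (Decidable (_ ∧ _))

def RankGap (π ρ : Fin n → Fin n) (h d : Fin n) : Prop :=
  ∀ a y, a ≤ y → InRect π h d a y → cornerRank π a y < cornerRank ρ a y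

lemma RankGap.mono {π ρ : Fin n → Fin n} {h d h' d' : Fin n} (hg : RankGap π ρ h d)
    (hh : h ≤ h') (hdd : π d' ≤ π d) (hhh : π h ≤ π h') (hd : d' ≤ d) :
    RankGap π ρ h' d' :=
  fun a y hay ⟨h₁, h₂, h₃, h₄⟩ => hg a y hay
    ⟨lt_of_le_of_lt (Fin.le_def.mp hh) h₁, h₂.trans (Fin.le_def.mp hdd),
      lt_of_le_of_lt (Fin.le_def.mp hhh) h₃, h₄.trans (Fin.le_def.mp hd)⟩

section Descent

variable {b : Fin n → Bool} {P Q : Equiv.Perm (Fin n)}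

/-- `x` is the first position where `P` and `Q` differ. -/
lemma exists_admissible_first_difference (hP : Involutive P) (hQ : Involutive Q)
    (hbQ : SignCompat b Q) (hle : ∀ a y, a ≤ y → cornerRank P a y ≤ cornerRank Q a y)
    (hne : P ≠ Q) :
    ∃ x : Fin n, Admissible b P x (Q x) ∧
      (∀ y : ℕ, (P x : ℕ) < y → y ≤ Q x →
        cornerRank P (x + 1) y < cornerRank Q (x + 1) y) ∧
      cornerRank Q (x + 1) (Q x + 1) ≤ cornerRank P (x + 1) (Q x + 1) := by
  obtain ⟨x₀, hx₀⟩ : ∃ x, P x ≠ Q x := by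
    by_contra! h
    exact hne (Equiv.ext h)
  obtain ⟨x, hx, hmin⟩ := wellFounded_lt.has_min {x | P x ≠ Q x} ⟨x₀, hx₀⟩
  have agree : ∀ z, z < x → P z = Q z := fun z hz => by_contra fun h => hmin z h hz
  have hxP : x ≤ P x := not_lt.mp fun h => hx <| by
    rw [← hQ (P x), ← agree _ h, hP]
  have hxQ : x ≤ Q x := not_lt.mp fun h => hx <| by
    rw [← hP (Q x), agree _ h, hQ]
  have hrow := cornerRank_congr (fun i (hi : (i : ℕ) < x) => agree i hi)
  have hPQ : P x < Q x := by
    refine lt_of_le_of_ne (not_lt.mp fun h => ?_) hx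
    have := hle (x + 1) (P x) (lt_of_le_of_lt hxQ h)
    rw [cornerRank_succ, cornerRank_succ, hrow, if_pos le_rfl,
      if_neg (not_le.mpr (Fin.lt_def.mp h))] at this
    omega
  have hxPQ : x < P (Q x) := by
    refine lt_of_le_of_ne (not_lt.mp fun h => ?_) fun h => ?_
    · have : Q (P (Q x)) = Q x := by rw [← agree _ h, hP]
      exact (hQ.injective this ▸ h).false
    · have := congrArg P h
      rw [hP] at this
      exact hPQ.ne this
  have hxQx : x < Q x := lt_of_le_of_lt hxP hPQ
  refine ⟨x, ⟨(hbQ x).1 hxQx, hbQ.apply_eq_true hQ hxQx, hPQ, hxPQ⟩, ?_, ?_⟩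
  · intro y hy hyQ
    rw [cornerRank_succ, cornerRank_succ, hrow, if_pos hyQ, if_neg (by omega)]
    omega
  · rw [cornerRank_succ, cornerRank_succ, hrow, if_neg (by omega), if_neg (by omega)]

/-- Where the gap closes inside the rectangle of `(x, d)`, comparing the rows after `x` at the
columns `y` and `c + 1` produces an arc of `P` from such a row into `[y, c]`; its right end
replaces `d`. -/
lemma exists_admissible_lt_of_not_rankGap (hP : Involutive P) (hbP : SignCompat b P)
    (hle : ∀ a y, a ≤ y → cornerRank P a y ≤ cornerRank Q a y) {x c d : Fin n}
    (hrow : ∀ y : ℕ, (P x : ℕ) < y → y ≤ c →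
      cornerRank P (x + 1) y < cornerRank Q (x + 1) y)
    (hcol : cornerRank Q (x + 1) (c + 1 : ℕ) ≤ cornerRank P (x + 1) (c + 1 : ℕ))
    (hd : Admissible b P x d) (hdc : d ≤ c) (hgap : ¬ RankGap P Q x d) :
    ∃ d', Admissible b P x d' ∧ d' ≤ c ∧ P d' < P d := by
  simp only [RankGap, not_forall, not_lt] at hgap
  obtain ⟨a, y, hay, ⟨hxa, haK, hJy, hyd⟩, hge⟩ := hgap
  replace hxa : (x : ℕ) + 1 ≤ a := hxa
  have hKd : P d ≤ d := hbP.apply_le hd.2.1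
  have hPy := cornerRank_add P hxa y
  have hQy := cornerRank_add Q hxa y
  have hPc := cornerRank_add P hxa (c + 1 : ℕ)
  have hQc := cornerRank_add Q hxa (c + 1 : ℕ)
  have hy := hrow y hJy (hyd.trans hdc)
  have hc := hle a (c + 1 : ℕ) (by omega)
  have hQsub : #{i : Fin n | (x : ℕ) + 1 ≤ i ∧ (i : ℕ) < a ∧ (c : ℕ) + 1 ≤ Q i} ≤
      #{i : Fin n | (x : ℕ) + 1 ≤ i ∧ (i : ℕ) < a ∧ y ≤ Q i} :=
    card_le_card fun i => by simp only [mem_filter, mem_univ, true_and]; omega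
  obtain ⟨i, hxi, hia, hyi, hic⟩ :
      ∃ i : Fin n, (x : ℕ) + 1 ≤ i ∧ (i : ℕ) < a ∧ y ≤ P i ∧ P i ≤ c := by
    by_contra! hno
    have hPsub : #{i : Fin n | (x : ℕ) + 1 ≤ i ∧ (i : ℕ) < a ∧ y ≤ P i} ≤
        #{i : Fin n | (x : ℕ) + 1 ≤ i ∧ (i : ℕ) < a ∧ (c : ℕ) + 1 ≤ P i} :=
      card_le_card fun i => by
        simp only [mem_filter, mem_univ, true_and]
        exact fun ⟨h₁, h₂, h₃⟩ => ⟨h₁, h₂, Fin.lt_def.mp (hno i h₁ h₂ h₃)⟩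
    omega
  have hiPi : i < P i := by rw [Fin.lt_def]; omega
  refine ⟨P i, ⟨hd.1, hbP.apply_eq_true hP hiPi, Fin.lt_def.mpr (by omega), ?_⟩, hic, ?_⟩
  all_goals rw [hP i, Fin.lt_def]; omega

lemma exists_admissible_rankGap (hP : Involutive P) (hQ : Involutive Q) (hbP : SignCompat b P)
    (hbQ : SignCompat b Q) (hle : ∀ a y, a ≤ y → cornerRank P a y ≤ cornerRank Q a y)
    (hne : P ≠ Q) : ∃ h d, Admissible b P h d ∧ RankGap P Q h d := by
  obtain ⟨x, hadm, hrow, hcol⟩ := exists_admissible_first_difference hP hQ hbQ hle hne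
  obtain ⟨d, ⟨hd, hdc⟩, hmin⟩ := (wellFounded_lt.onFun (f := fun d => P d)).has_min
    {d | Admissible b P x d ∧ d ≤ Q x} ⟨Q x, hadm, le_rfl⟩
  refine ⟨x, d, hd, by_contra fun hgap => ?_⟩
  obtain ⟨d', hd', hd'c, hlt⟩ :=
    exists_admissible_lt_of_not_rankGap hP hbP hle hrow hcol hd hdc hgap
  exact hmin d' ⟨hd', hd'c⟩ hlt

/-- A pair with a rank gap minimising `d - h` is a free rise: a point of the graph of `P`
strictly inside its rectangle would give a smaller admissible pair with a rank gap. -/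
lemma exists_admissible_rankGap_freeRise (hP : Involutive P) (hbP : SignCompat b P)
    (hex : ∃ h d, Admissible b P h d ∧ RankGap P Q h d) :
    ∃ h d, Admissible b P h d ∧ RankGap P Q h d ∧ FreeRise P h (P d) := by
  obtain ⟨h₀, d₀, hex⟩ := hex
  obtain ⟨⟨h, d⟩, ⟨hadm, hgap⟩, hmin⟩ :=
    (wellFounded_lt.onFun (f := fun p : Fin n × Fin n => (p.2 : ℕ) - p.1)).has_min
      {p | Admissible b P p.1 p.2 ∧ RankGap P Q p.1 p.2} ⟨(h₀, d₀), hex⟩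
  dsimp only at hadm hgap
  have smaller : ∀ h' d', Admissible b P h' d' → RankGap P Q h' d' →
      (d' : ℕ) - h' < d - h → False := fun h' d' ha hg hlt => hmin (h', d') ⟨ha, hg⟩ hlt
  obtain ⟨hbh, hbd, hJd, hhK⟩ := hadm
  have hhJ : h ≤ P h := hbP.le_apply hbh
  have hKd : P d ≤ d := hbP.apply_le hbd
  refine ⟨h, d, ⟨hbh, hbd, hJd, hhK⟩, hgap, hhK, by rwa [hP d], ?_⟩
  rintro z hhz hzK ⟨hJz, hzd⟩
  rw [hP d] at hzd
  rcases lt_trichotomy z (P z) with hz | hz | hz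
  · refine smaller h (P z) ⟨hbh, hbP.apply_eq_true hP hz, hJz, by rwa [hP z]⟩
      (hgap.mono le_rfl (by rw [hP z]; exact hzK.le) le_rfl hzd.le) (by omega)
  · cases hbz : b z
    · refine smaller z d ⟨hbz, hbd, hzd, hzK⟩
        (hgap.mono hhz.le le_rfl hJz.le le_rfl) (by omega)
    · refine smaller h z ⟨hbh, hbz, by rwa [← hz] at hJz, by rwa [← hz]⟩
        (hgap.mono le_rfl (by rw [← hz]; exact hzK.le) le_rfl (by rw [hz]; exact hzd.le))
        (by rw [hz] at hzd; omega)
  · refine smaller (P z) d ⟨hbP.apply_eq_false hP hz, hbd, by rw [hP z]; omega, by omega⟩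
      (hgap.mono (by omega) le_rfl (by rw [hP z]; omega) le_rfl) (by omega)

end Descent

section Resolve

/-- `h` is matched with `d`; their former partners `P h` and `P d` are matched with each other
when `P d < P h` and become fixed points otherwise. -/
def resolve (P : Fin n → Fin n) (h d : Fin n) (x : Fin n) : Fin n :=
  if x = h then d else if x = d then h
  else if x = P h then (if P d < P h then P d else x)
  else if x = P d then (if P d < P h then P h else x)
  else P x

variable {P : Fin n → Fin n} {h d : Fin n}

@[simp] lemma resolve_apply_left : resolve P h d h = d := by simp [resolve]

lemma resolve_apply_right (hhd : h ≠ d) : resolve P h d d = h := by simp [resolve, hhd.symm]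

lemma resolve_apply_left_partner (hJh : P h ≠ h) (hJd : P h ≠ d) :
    resolve P h d (P h) = if P d < P h then P d else P h := by
  simp [resolve, hJh, hJd]

lemma resolve_apply_right_partner (hKh : P d ≠ h) (hKd : P d ≠ d) (hKJ : P d ≠ P h) :
    resolve P h d (P d) = if P d < P h then P h else P d := by
  simp [resolve, hKh, hKd, hKJ]

lemma resolve_apply_of_ne {x : Fin n} (hxh : x ≠ h) (hxd : x ≠ d) (hxJ : x ≠ P h)
    (hxK : x ≠ P d) : resolve P h d x = P x := by
  simp [resolve, hxh, hxd, hxJ, hxK]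

end Resolve

section ResolvePerm

variable {b : Fin n → Bool} {P : Perm (Fin n)} {h d : Fin n}

lemma involutive_resolve (hP : Involutive P) (hb : SignCompat b P) (hadm : Admissible b P h d) :
    Involutive (resolve P h d) := by
  have hhd := (hadm.lt hb).ne
  have hJd : P h ≠ d := hadm.2.2.1.ne
  have hKh : P d ≠ h := hadm.2.2.2.ne'
  have hKJ : P d ≠ P h := P.injective.ne hhd.symm
  intro x
  rcases eq_or_ne x h with rfl | hxh
  · rw [resolve_apply_left, resolve_apply_right hhd]
  rcases eq_or_ne x d with rfl | hxd
  · rw [resolve_apply_right hhd, resolve_apply_left]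
  rcases eq_or_ne x (P h) with rfl | hxJ
  · rw [resolve_apply_left_partner hxh hJd]
    split_ifs with hlt
    · rw [resolve_apply_right_partner hKh (hlt.trans hadm.2.2.1).ne hKJ, if_pos hlt]
    · rw [resolve_apply_left_partner hxh hJd, if_neg hlt]
  rcases eq_or_ne x (P d) with rfl | hxK
  · rw [resolve_apply_right_partner hKh hxd hKJ]
    split_ifs with hlt
    · rw [resolve_apply_left_partner (hadm.2.2.2.trans hlt).ne' hJd, if_pos hlt]
    · rw [resolve_apply_right_partner hKh hxd hKJ, if_neg hlt]
  rw [resolve_apply_of_ne hxh hxd hxJ hxK,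
    resolve_apply_of_ne (fun e => hxJ (by rw [← e, hP])) (fun e => hxK (by rw [← e, hP]))
      (fun e => hxh (P.injective e)) (fun e => hxd (P.injective e)), hP]

lemma signCompat_resolve (hP : Involutive P) (hb : SignCompat b P) (hadm : Admissible b P h d) :
    SignCompat b (resolve P h d) := by
  have hhd := hadm.lt hb
  obtain ⟨hbh, hbd, hJd, hhK⟩ := hadm
  have hhJ := hb.le_apply hbh
  have hKd := hb.apply_le hbd
  intro x
  rcases eq_or_ne x h with rfl | hxh
  · rw [resolve_apply_left]
    exact ⟨fun _ => hbh, fun hlt => absurd hlt (not_lt.mpr hhd.le)⟩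
  rcases eq_or_ne x d with rfl | hxd
  · rw [resolve_apply_right hhd.ne]
    exact ⟨fun hlt => absurd hlt (not_lt.mpr hhd.le), fun _ => hbd⟩
  rcases eq_or_ne x (P h) with rfl | hxJ
  · rw [resolve_apply_left_partner hxh hxd]
    split_ifs with hlt
    · exact ⟨fun h' => absurd h' (not_lt.mpr hlt.le),
        fun _ => hb.apply_eq_true hP (lt_of_le_of_ne hhJ hxh.symm)⟩
    · exact ⟨fun h' => absurd h' (lt_irrefl _), fun h' => absurd h' (lt_irrefl _)⟩
  rcases eq_or_ne x (P d) with rfl | hxK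
  · rw [resolve_apply_right_partner hxh hxd (P.injective.ne hhd.ne')]
    split_ifs with hlt
    · exact ⟨fun _ => hb.apply_eq_false hP (lt_of_le_of_ne hKd hxd),
        fun h' => absurd h' (not_lt.mpr hlt.le)⟩
    · exact ⟨fun h' => absurd h' (lt_irrefl _), fun h' => absurd h' (lt_irrefl _)⟩
  rw [resolve_apply_of_ne hxh hxd hxJ hxK]
  exact hb x

lemma cornerRank_resolve (hP : Involutive P) (hb : SignCompat b P) (hadm : Admissible b P h d)
    {a y : ℕ} (hay : a ≤ y) :
    cornerRank (resolve P h d) a y = cornerRank P a y + if InRect P h d a y then 1 else 0 := by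
  have hhd := (hadm.lt hb).ne
  have hJK : P h ≠ P d := P.injective.ne hhd
  obtain ⟨hbh, hbd, hJd, hhK⟩ := hadm
  have hhJ := hb.le_apply hbh
  have hKd := hb.apply_le hbd
  -- only the rows `h` and `P d` count: the rows `d` and `P h` are sent weakly below themselves,
  -- so when they are `< a` they never reach a column `y ≥ a`
  have key : ∀ x : Fin n,
      ((if (x : ℕ) < a ∧ y ≤ resolve P h d x then 1 else 0) +
        (if x = h then (if (h : ℕ) < a ∧ y ≤ P h then 1 else 0) else 0) +
        (if x = P d then (if (P d : ℕ) < a ∧ y ≤ d then 1 else 0) else 0)) =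
      (if (x : ℕ) < a ∧ y ≤ P x then 1 else 0) +
        (if x = h then (if (h : ℕ) < a ∧ y ≤ d then 1 else 0) else 0) +
        (if x = P d then (if (P d : ℕ) < a ∧ y ≤ P h then 1 else 0) else 0) := by
    intro x
    rcases eq_or_ne x h with rfl | hxh
    · rw [resolve_apply_left]
      split_ifs <;> omega
    rcases eq_or_ne x d with rfl | hxd
    · rw [resolve_apply_right hhd]
      split_ifs <;> omega
    rcases eq_or_ne x (P h) with rfl | hxJ
    · rw [resolve_apply_left_partner hxh hxd, hP]
      split_ifs <;> omega
    rcases eq_or_ne x (P d) with rfl | hxK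
    · rw [resolve_apply_right_partner hxh hxd hJK.symm, hP]
      split_ifs <;> omega
    rw [resolve_apply_of_ne hxh hxd hxJ hxK]
    simp [hxh, hxK]
  have hsum := Finset.sum_congr rfl fun x (_ : x ∈ univ) => key x
  simp only [sum_add_distrib, sum_ite_eq', mem_univ, if_true, ← card_filter] at hsum
  unfold cornerRank
  by_cases hR : InRect P h d a y
  · obtain ⟨h₁, h₂, h₃, h₄⟩ := hR
    rw [if_pos ⟨h₁, h₂, h₃, h₄⟩]
    split_ifs at hsum <;> omega
  · rw [if_neg hR]
    unfold InRect at hR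
    split_ifs at hsum <;> omega

lemma resolve_eq_mul_swap (hh : P h = h) (hd : P d = d) (hhd : h ≠ d) :
    resolve P h d = ⇑(P * swap h d) := by
  funext x
  rcases eq_or_ne x h with rfl | hxh
  · simp [hd]
  rcases eq_or_ne x d with rfl | hxd
  · simp [resolve_apply_right hhd, hh]
  rw [resolve_apply_of_ne hxh hxd (by rwa [hh]) (by rwa [hd]), Perm.mul_apply,
    swap_apply_of_ne_of_ne hxh hxd]

lemma resolve_eq_conj_swap_left (hP : Involutive P) (hh : P h = h)
    (hhK : h < P d) (hKd : P d ≠ d) :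
    resolve P h d = ⇑(swap h (P d) * P * swap h (P d)) := by
  have hhd : h ≠ d := fun e => hKd (by rw [← e, hh])
  funext x
  rcases eq_or_ne x h with rfl | hxh
  · simp [hP d, swap_apply_of_ne_of_ne hhd.symm hKd.symm]
  rcases eq_or_ne x d with rfl | hxd
  · simp [resolve_apply_right hhd, swap_apply_of_ne_of_ne hhd.symm hKd.symm]
  rcases eq_or_ne x (P d) with rfl | hxK
  · simp [resolve_apply_right_partner hhK.ne' hKd (by rw [hh]; exact hhK.ne'), hh, hhK.not_gt]
  have hPxh : P x ≠ h := fun e => hxh (by rw [← hh, ← e, hP])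
  have hPxK : P x ≠ P d := fun e => hxd (P.injective e)
  rw [resolve_apply_of_ne hxh hxd (by rwa [hh]) hxK]
  simp [swap_apply_of_ne_of_ne hxh hxK, swap_apply_of_ne_of_ne hPxh hPxK]

lemma resolve_eq_conj_swap_right (hP : Involutive P) (hhJ : h < P h) (hJd : P h < d)
    (hhK : h < P d) (hK : P d = d ∨ P d < P h) :
    resolve P h d = ⇑(swap (P h) d * P * swap (P h) d) := by
  have hhd : h ≠ d := (hhJ.trans hJd).ne
  have hJK : P h ≠ P d := P.injective.ne hhd
  funext x
  rcases eq_or_ne x h with rfl | hxh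
  · simp [swap_apply_of_ne_of_ne hhJ.ne hhd]
  rcases eq_or_ne x d with rfl | hxd
  · simp [resolve_apply_right hhd, hP h, swap_apply_of_ne_of_ne hhJ.ne hhd]
  rcases eq_or_ne x (P h) with rfl | hxJ
  · rw [resolve_apply_left_partner hxh hxd]
    rcases hK with hK | hK
    · simp [hK, hJd.not_gt]
    · simp [hK, swap_apply_of_ne_of_ne hJK.symm (hK.trans hJd).ne]
  rcases eq_or_ne x (P d) with rfl | hxK
  · have hK : P d < P h := hK.resolve_left hxd
    simp [resolve_apply_right_partner hxh hxd hJK.symm, hK, hP d,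
      swap_apply_of_ne_of_ne hJK.symm hxd]
  have hPxJ : P x ≠ P h := fun e => hxh (P.injective e)
  have hPxd : P x ≠ d := fun e => hxK (by rw [← e, hP])
  rw [resolve_apply_of_ne hxh hxd hxJ hxK]
  simp [swap_apply_of_ne_of_ne hxJ hxd, swap_apply_of_ne_of_ne hPxJ hPxd]

lemma resolve_eq_mul_swap_mul_swap_mul_swap (hP : Involutive P) (hhJ : h < P h)
    (hJK : P h < P d) (hKd : P d < d) :
    resolve P h d = ⇑(P * swap h (P h) * swap (P d) d * swap h d) := by
  have hhK := hhJ.trans hJK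
  have hJd := hJK.trans hKd
  have hhd : h ≠ d := (hhK.trans hKd).ne
  funext x
  rcases eq_or_ne x h with rfl | hxh
  · simp [swap_apply_of_ne_of_ne hhK.ne' hJK.ne', hP d]
  rcases eq_or_ne x d with rfl | hxd
  · simp [resolve_apply_right hhd, swap_apply_of_ne_of_ne hhK.ne hhd, hP h]
  rcases eq_or_ne x (P h) with rfl | hxJ
  · simp [resolve_apply_left_partner hxh hxd, hJK.not_gt, swap_apply_of_ne_of_ne hxh hxd,
      swap_apply_of_ne_of_ne hJK.ne hxd]
  rcases eq_or_ne x (P d) with rfl | hxK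
  · simp [resolve_apply_right_partner hxh hxd hJK.ne', hJK.not_gt, swap_apply_of_ne_of_ne hxh hxd,
      swap_apply_of_ne_of_ne hhd.symm hJd.ne']
  rw [resolve_apply_of_ne hxh hxd hxJ hxK]
  simp [swap_apply_of_ne_of_ne hxh hxd, swap_apply_of_ne_of_ne hxK hxd,
    swap_apply_of_ne_of_ne hxh hxJ]

end ResolvePerm

end BruhatSect

lemma Clan.involutive {n : ℕ} (γ : Clan n) : Function.Involutive γ.1.1 := fun i => by
  simpa using congrArg (fun e : Equiv.Perm (Fin n) => e i) γ.2.1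

namespace Sect

open Function BruhatSect

variable {n : ℕ} {b : Fin n → Bool}

lemma signCompat (γ : Sect b) : SignCompat b γ.1.1.1 := fun i => by
  have hbi := congrFun γ.2 i
  refine ⟨fun hi => ?_, fun hi => ?_⟩ <;> simp [baseClan, hi, hi.not_gt] at hbi <;> exact hbi

lemma sign_eq (γ : Sect b) (i : Fin n) : γ.1.1.2 i = if γ.1.1.1 i = i then b i else false := by
  split_ifs with hi
  · have hbi := congrFun γ.2 i
    simp [baseClan, hi] at hbi
    exact hbi
  · exact γ.1.2.2 i hi

lemma ext_of_perm_eq {γ τ : Sect b} (h : γ.1.1.1 = τ.1.1.1) : γ = τ :=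
  Subtype.ext <| Subtype.ext <| Prod.ext h <| funext fun i => by rw [sign_eq, sign_eq, h]

def ofInvolutive (f : Fin n → Fin n) (hf : Involutive f) (hb : SignCompat b f) : Sect b :=
  ⟨⟨(hf.toPerm f, fun i => if f i = i then b i else false), Equiv.ext hf,
      fun _ hi => if_neg hi⟩,
    funext fun i => by
      unfold baseClan
      rcases lt_trichotomy i (f i) with hi | hi | hi
      · simp [hi, (hb i).1 hi]
      · simp [← hi]
      · simp [hi, hi.not_gt, (hb i).2 hi]⟩

def resolve (γ : Sect b) (h d : Fin n) (hadm : Admissible b γ.1.1.1 h d) : Sect b :=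
  ofInvolutive (BruhatSect.resolve γ.1.1.1 h d)
    (involutive_resolve γ.1.involutive γ.signCompat hadm)
    (signCompat_resolve γ.1.involutive γ.signCompat hadm)

variable {γ : Sect b} {h d : Fin n} (hadm : Admissible b γ.1.1.1 h d)
include hadm

lemma sign_resolve (x : Fin n) : (γ.resolve h d hadm).1.1.2 x =
    if BruhatSect.resolve γ.1.1.1 h d x = x then b x else false := rfl

lemma cornerRank_resolve {a y : ℕ} (hay : a ≤ y) :
    cornerRank (γ.resolve h d hadm).1.1.1 a y =
      cornerRank γ.1.1.1 a y + if InRect γ.1.1.1 h d a y then 1 else 0 :=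
  BruhatSect.cornerRank_resolve γ.1.involutive γ.signCompat hadm hay

lemma ne_resolve : γ ≠ γ.resolve h d hadm := fun e => by
  have hrect : InRect γ.1.1.1 h d (h + 1) d :=
    ⟨Nat.lt_succ_self _, hadm.2.2.2, hadm.2.2.1, le_rfl⟩
  have := cornerRank_resolve hadm (a := h + 1) (y := d) (hadm.lt γ.signCompat)
  rw [if_pos hrect, ← congrArg (fun σ : Sect b => cornerRank σ.1.1.1 (h + 1) d) e] at this
  omega

/-- The sign changes only at `d` if `d` was fixed, and at `P h` if it becomes fixed. -/
lemma sign_resolve_eq {x : Fin n} (hxd : x = d → γ.1.1.1 d ≠ d)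
    (hxJ : x = γ.1.1.1 h → γ.1.1.1 h = h ∨ γ.1.1.1 d < γ.1.1.1 h) :
    (γ.resolve h d hadm).1.1.2 x = γ.1.1.2 x := by
  have hP := γ.1.involutive
  have hhd := (hadm.lt γ.signCompat).ne
  rw [sign_resolve, γ.sign_eq]
  rcases eq_or_ne x h with rfl | hxh
  · rw [resolve_apply_left, if_neg hhd.symm]
    split_ifs <;> simp [hadm.1]
  rcases eq_or_ne x d with rfl | hxd
  · rw [resolve_apply_right hhd, if_neg hhd, if_neg (hxd rfl)]
  rcases eq_or_ne x (γ.1.1.1 h) with rfl | hxJ'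
  · have hlt := (hxJ rfl).resolve_left hxh
    rw [resolve_apply_left_partner hxh hxd, if_pos hlt, if_neg hlt.ne, hP, if_neg hxh.symm]
  rcases eq_or_ne x (γ.1.1.1 d) with rfl | hxK
  · rw [resolve_apply_right_partner hxh hxd (γ.1.1.1.injective.ne hhd.symm), hP,
      if_neg hxd.symm]
    split_ifs with hlt hfix hfix
    · exact absurd hfix hlt.ne'
    · rfl
    · exact γ.signCompat.apply_eq_false hP (lt_of_le_of_ne (γ.signCompat.apply_le hadm.2.1) hxd)
    · exact absurd rfl hfix
  · rw [resolve_apply_of_ne hxh hxd hxJ' hxK]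

variable (hfree : FreeRise γ.1.1.1 h (γ.1.1.1 d))
include hfree

lemma move1_resolve (hh : γ.1.1.1 h = h) (hd : γ.1.1.1 d = d) :
    Move1 γ.1 (γ.resolve h d hadm).1 :=
  ⟨h, d, by rw [← hd]; exact hadm.2.2.2, hh, hd, by rw [γ.sign_eq, if_pos hh, hadm.1],
    by rw [γ.sign_eq, if_pos hd, hadm.2.1], by rwa [hd] at hfree,
    Equiv.ext (congrFun (resolve_eq_mul_swap hh hd (hadm.lt γ.signCompat).ne)),
    fun _ _ hxd => sign_resolve_eq hadm (fun e => absurd e hxd) (fun _ => Or.inl hh)⟩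

lemma move2_resolve (hh : γ.1.1.1 h = h) (hKd : γ.1.1.1 d ≠ d) :
    Move2 γ.1 (γ.resolve h d hadm).1 := by
  have hP := γ.1.involutive
  refine ⟨h, γ.1.1.1 d, hadm.2.2.2, hh, by rw [γ.sign_eq, if_pos hh, hadm.1], ?_, hfree,
    Equiv.ext (congrFun (resolve_eq_conj_swap_left hP hh hadm.2.2.2 hKd)), ?_,
    fun _ _ _ => sign_resolve_eq hadm (fun _ => hKd) (fun _ => Or.inl hh)⟩
  · rw [hP]
    exact lt_of_le_of_ne (γ.signCompat.apply_le hadm.2.1) hKd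
  · rw [sign_resolve_eq hadm (fun _ => hKd) (fun _ => Or.inl hh), γ.sign_eq, hP, if_neg hKd.symm]

lemma move3_resolve (hJh : γ.1.1.1 h ≠ h) (hd : γ.1.1.1 d = d) :
    Move3 γ.1 (γ.resolve h d hadm).1 := by
  have hP := γ.1.involutive
  have hhJ : h < γ.1.1.1 h := lt_of_le_of_ne (γ.signCompat.le_apply hadm.1) hJh.symm
  refine ⟨h, d, hhJ, hadm.2.2.1, hd, by rw [γ.sign_eq, if_pos hd, hadm.2.1],
    by rwa [hd] at hfree, Equiv.ext (congrFun (resolve_eq_conj_swap_right hP hhJ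
      hadm.2.2.1 hadm.2.2.2 (Or.inl hd))), ?_,
    fun _ hxJ hxd => sign_resolve_eq hadm (fun e => absurd e hxd) (fun e => absurd e hxJ)⟩
  rw [sign_resolve, resolve_apply_left_partner hJh hadm.2.2.1.ne, hd, if_neg hadm.2.2.1.not_gt,
    if_pos rfl]
  exact γ.signCompat.apply_eq_true hP hhJ

lemma move4_resolve (hKd : γ.1.1.1 d ≠ d) (hlt : γ.1.1.1 d < γ.1.1.1 h) :
    Move4 γ.1 (γ.resolve h d hadm).1 := by
  have hP := γ.1.involutive
  have hhJ : h < γ.1.1.1 h := hadm.2.2.2.trans hlt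
  refine ⟨h, γ.1.1.1 d, hadm.2.2.2, hlt, by rw [hP]; exact hadm.2.2.1, hfree, ?_,
    fun _ => sign_resolve_eq hadm (fun _ => hKd) (fun _ => Or.inr hlt)⟩
  rw [hP]
  exact Equiv.ext (congrFun (resolve_eq_conj_swap_right hP hhJ hadm.2.2.1 hadm.2.2.2
    (Or.inr hlt)))

lemma move5_resolve (hJh : γ.1.1.1 h ≠ h) (hKd : γ.1.1.1 d ≠ d)
    (hlt : γ.1.1.1 h < γ.1.1.1 d) :
    Move5 γ.1 (γ.resolve h d hadm).1 := by
  have hP := γ.1.involutive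
  have hhJ : h < γ.1.1.1 h := lt_of_le_of_ne (γ.signCompat.le_apply hadm.1) hJh.symm
  have hKd' : γ.1.1.1 d < d := lt_of_le_of_ne (γ.signCompat.apply_le hadm.2.1) hKd
  refine ⟨h, γ.1.1.1 d, hhJ, hlt, by rw [hP]; exact hKd', hfree, ?_, ?_, ?_,
    fun _ hxJ _ => sign_resolve_eq hadm (fun _ => hKd) (fun e => absurd e hxJ)⟩
  · rw [hP]
    exact Equiv.ext (congrFun (resolve_eq_mul_swap_mul_swap_mul_swap hP hhJ hlt hKd'))
  · rw [sign_resolve, resolve_apply_left_partner hJh hadm.2.2.1.ne, if_neg hlt.not_gt, if_pos rfl]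
    exact γ.signCompat.apply_eq_true hP hhJ
  · rw [sign_resolve, resolve_apply_right_partner hadm.2.2.2.ne' hKd hlt.ne', if_neg hlt.not_gt,
      if_pos rfl]
    exact γ.signCompat.apply_eq_false hP hKd'

lemma moves_resolve :
    Move1 γ.1 (γ.resolve h d hadm).1 ∨ Move2 γ.1 (γ.resolve h d hadm).1 ∨
      Move3 γ.1 (γ.resolve h d hadm).1 ∨ Move4 γ.1 (γ.resolve h d hadm).1 ∨
      Move5 γ.1 (γ.resolve h d hadm).1 := by
  by_cases hh : γ.1.1.1 h = h <;> by_cases hd : γ.1.1.1 d = d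
  · exact .inl (move1_resolve hadm hfree hh hd)
  · exact .inr <| .inl (move2_resolve hadm hfree hh hd)
  · exact .inr <| .inr <| .inl (move3_resolve hadm hfree hh hd)
  rcases lt_or_gt_of_ne (γ.1.1.1.injective.ne (hadm.lt γ.signCompat).ne.symm) with hlt | hlt
  · exact .inr <| .inr <| .inr <| .inl (move4_resolve hadm hfree hd hlt)
  · exact .inr <| .inr <| .inr <| .inr (move5_resolve hadm hfree hh hd hlt)

end Sect

namespace BruhatSect

open Finset Function

section SectOrder

variable {n : ℕ} {b : Fin n → Bool} {π : Fin n → Fin n}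

lemma cornerRank_eq_of_signCompat (hπ : Involutive π) (hb : SignCompat b π) {a y a' y' : ℕ}
    (hay : a ≤ y) (hay' : a' ≤ y')
    (ha : ∀ i : Fin n, b i = false → ((i : ℕ) < a ↔ (i : ℕ) < a'))
    (hy : ∀ j : Fin n, b j = true → (y ≤ j ↔ y' ≤ j)) :
    cornerRank π a y = cornerRank π a' y' := by
  unfold cornerRank
  congr 1
  ext i
  simp only [mem_filter, mem_univ, true_and]
  constructor
  · rintro ⟨hi, hyi⟩
    have hlt : i < π i := by rw [Fin.lt_def]; omega
    exact ⟨(ha i ((hb i).1 hlt)).1 hi, (hy _ (hb.apply_eq_true hπ hlt)).1 hyi⟩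
  · rintro ⟨hi, hyi⟩
    have hlt : i < π i := by rw [Fin.lt_def]; omega
    exact ⟨(ha i ((hb i).1 hlt)).2 hi, (hy _ (hb.apply_eq_true hπ hlt)).2 hyi⟩

lemma cornerRank_eq_zero_of_signCompat (hπ : Involutive π) (hb : SignCompat b π) {a y : ℕ}
    (hay : a ≤ y)
    (hno : ¬ ((∃ i : Fin n, b i = false ∧ (i : ℕ) < a) ∧
      ∃ j : Fin n, b j = true ∧ y ≤ j)) :
    cornerRank π a y = 0 := by
  refine card_eq_zero.mpr (filter_eq_empty_iff.mpr fun i _ ⟨hi, hyi⟩ => hno ?_)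
  have hlt : i < π i := by rw [Fin.lt_def]; omega
  exact ⟨⟨i, (hb i).1 hlt, hi⟩, π i, hb.apply_eq_true hπ hlt, hyi⟩

end SectOrder

section Positions

variable {n q : ℕ} {b : Fin n → Bool}

lemma minusPos_le_minusPos_iff (hq : (univ.filter fun i => b i = false).card = q)
    {k k' : Fin q} :
    minusPos b hq k ≤ minusPos b hq k' ↔ k ≤ k' :=
  Subtype.coe_le_coe.trans (OrderIso.le_iff_le _)

lemma plusPos_le_plusPos_iff (hq : (univ.filter fun i => b i = true).card = q) {k k' : Fin q} :
    plusPos b hq k ≤ plusPos b hq k' ↔ k ≤ k' :=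
  Subtype.coe_le_coe.trans (OrderIso.le_iff_le _)

lemma exists_minusPos_eq (hq : (univ.filter fun i => b i = false).card = q) {i : Fin n}
    (hi : b i = false) : ∃ k, minusPos b hq k = i :=
  ⟨((univ.filter fun i => b i = false).orderIsoOfFin hq).symm ⟨i, by simpa using hi⟩,
    by simp [minusPos]⟩

lemma exists_plusPos_eq (hq : (univ.filter fun i => b i = true).card = q) {i : Fin n}
    (hi : b i = true) : ∃ k, plusPos b hq k = i :=
  ⟨((univ.filter fun i => b i = true).orderIsoOfFin hq).symm ⟨i, by simpa using hi⟩,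
    by simp [plusPos]⟩

end Positions

section SectRank

variable {p q : ℕ} {b : Fin (p + q) → Bool}
  (hbt : (univ.filter fun i => b i = true).card = p)
  (hbf : (univ.filter fun i => b i = false).card = q)

lemma sectRank_eq_cornerRank (γ : Sect b) {k : Fin q} {l : Fin p}
    (hkl : minusPos b hbf k < plusPos b hbt l) :
    sectRank b hbt hbf γ k l = cornerRank γ.1.1.1 (minusPos b hbf k + 1) (plusPos b hbt l) := by
  unfold sectRank cornerRank
  apply card_nbij (fun z => minusPos b hbf z.1)
  · intro z hz
    simp only [coe_filter, mem_univ, true_and, Set.mem_ofPred_eq] at hz ⊢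
    obtain ⟨hzγ, hzk, hlz⟩ := hz
    refine ⟨Nat.lt_succ_of_le ((minusPos_le_minusPos_iff hbf).2 hzk), ?_⟩
    rw [hzγ]
    exact (plusPos_le_plusPos_iff hbt).2 hlz
  · intro z hz w hw hzw
    simp only [coe_filter, mem_univ, true_and, Set.mem_ofPred_eq] at hz hw
    have h₁ : z.1 = w.1 :=
      le_antisymm ((minusPos_le_minusPos_iff hbf).1 hzw.le)
        ((minusPos_le_minusPos_iff hbf).1 hzw.ge)
    have h₂ : plusPos b hbt z.2 = plusPos b hbt w.2 := by rw [← hz.1, ← hw.1, h₁]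
    exact Prod.ext h₁
      (le_antisymm ((plusPos_le_plusPos_iff hbt).1 h₂.le)
        ((plusPos_le_plusPos_iff hbt).1 h₂.ge))
  · intro i hi
    simp only [coe_filter, mem_univ, true_and, Set.mem_ofPred_eq] at hi
    have hlt : i < γ.1.1.1 i := by rw [Fin.lt_def] at hkl ⊢; omega
    obtain ⟨k', hk'⟩ := exists_minusPos_eq hbf ((γ.signCompat i).1 hlt)
    obtain ⟨l', hl'⟩ := exists_plusPos_eq hbt (γ.signCompat.apply_eq_true γ.1.involutive hlt)
    refine ⟨(k', l'), ?_, hk'⟩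
    simp only [coe_filter, mem_univ, true_and, Set.mem_ofPred_eq]
    refine ⟨by rw [hk', hl'], (minusPos_le_minusPos_iff hbf).1 ?_,
      (plusPos_le_plusPos_iff hbt).1 ?_⟩
    · rw [Fin.le_def, hk']; omega
    · rw [hl']; exact Fin.le_def.mpr hi.2

lemma sectLe_iff (γ τ : Sect b) : sectLe b hbt hbf γ τ ↔
    ∀ a y, a ≤ y → cornerRank γ.1.1.1 a y ≤ cornerRank τ.1.1.1 a y := by
  refine ⟨fun hle a y hay => ?_, fun hR k l hkl => ?_⟩
  · by_cases hex : (∃ i, b i = false ∧ (i : ℕ) < a) ∧ ∃ j, b j = true ∧ y ≤ j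
    swap
    · rw [cornerRank_eq_zero_of_signCompat γ.1.involutive γ.signCompat hay hex]
      exact Nat.zero_le _
    obtain ⟨⟨i₀, hi₀, hi₀a⟩, j₀, hj₀, hj₀y⟩ := hex
    obtain ⟨k₀, rfl⟩ := exists_minusPos_eq hbf hi₀
    obtain ⟨l₀, rfl⟩ := exists_plusPos_eq hbt hj₀
    have hK : (univ.filter fun k => (minusPos b hbf k : ℕ) < a).Nonempty :=
      ⟨k₀, by simpa using hi₀a⟩
    have hL : (univ.filter fun l => y ≤ plusPos b hbt l).Nonempty :=
      ⟨l₀, by simpa using hj₀y⟩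
    set k := (univ.filter fun k => (minusPos b hbf k : ℕ) < a).max' hK
    set l := (univ.filter fun l => y ≤ plusPos b hbt l).min' hL
    have hka : (minusPos b hbf k : ℕ) < a := (mem_filter.mp (max'_mem _ hK)).2
    have hly : y ≤ plusPos b hbt l := (mem_filter.mp (min'_mem _ hL)).2
    have ha : ∀ i : Fin (p + q), b i = false →
        ((i : ℕ) < a ↔ (i : ℕ) < minusPos b hbf k + 1) := by
      intro i hi
      obtain ⟨k', rfl⟩ := exists_minusPos_eq hbf hi
      have := (minusPos_le_minusPos_iff hbf (k := k') (k' := k)).2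
      exact ⟨fun h' => Nat.lt_succ_of_le (this (le_max' _ _ (by simpa using h'))),
        fun h' => by omega⟩
    have hy : ∀ j : Fin (p + q), b j = true → (y ≤ j ↔ plusPos b hbt l ≤ (j : ℕ)) := by
      intro j hj
      obtain ⟨l', rfl⟩ := exists_plusPos_eq hbt hj
      have := (plusPos_le_plusPos_iff hbt (k := l) (k' := l')).2
      exact ⟨fun h' => this (min'_le _ _ (by simpa using h')), fun h' => hly.trans h'⟩
    have hkl : minusPos b hbf k < plusPos b hbt l := Fin.lt_def.mpr (by omega)
    have hay' : (minusPos b hbf k : ℕ) + 1 ≤ plusPos b hbt l := hkl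
    rw [cornerRank_eq_of_signCompat γ.1.involutive γ.signCompat hay hay' ha hy,
      cornerRank_eq_of_signCompat τ.1.involutive τ.signCompat hay hay' ha hy,
      ← sectRank_eq_cornerRank hbt hbf γ hkl, ← sectRank_eq_cornerRank hbt hbf τ hkl]
    exact hle k l hkl
  · rw [sectRank_eq_cornerRank hbt hbf γ hkl, sectRank_eq_cornerRank hbt hbf τ hkl]
    exact hR _ _ hkl

end SectRank

end BruhatSect

open BruhatSect

/-- If γ ⋖ τ is a covering relation of the Bruhat order restricted to the
sect C_{p,q}^λ (equivalently, of the rank-tableau order on rook placements of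
shape λ), then the base clans of γ and τ agree, and τ is obtained from γ by
one of the five pattern replacements (−+ → 11; −11 → 1−1; 11+ → 1+1;
1212 → 1221; 1122 → 1+−1) applied at a free rise. -/
theorem sect_covering_relations (p q : ℕ) (b : Fin (p + q) → Bool)
    (hbt : (Finset.univ.filter fun i => b i = true).card = p)
    (hbf : (Finset.univ.filter fun i => b i = false).card = q)
    (γ τ : Sect b)
    (hlt : sectLe b hbt hbf γ τ ∧ γ ≠ τ)
    (hcov : ¬ ∃ σ : Sect b, (sectLe b hbt hbf γ σ ∧ γ ≠ σ) ∧
      (sectLe b hbt hbf σ τ ∧ σ ≠ τ)) :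
    baseClan γ.1 = baseClan τ.1 ∧
      (Move1 γ.1 τ.1 ∨ Move2 γ.1 τ.1 ∨ Move3 γ.1 τ.1 ∨ Move4 γ.1 τ.1 ∨
        Move5 γ.1 τ.1) := by
  obtain ⟨hle, hne⟩ := hlt
  have hrank := (sectLe_iff hbt hbf γ τ).1 hle
  obtain ⟨h, d, hadm, hgap, hfree⟩ := exists_admissible_rankGap_freeRise γ.1.involutive
    γ.signCompat (exists_admissible_rankGap γ.1.involutive τ.1.involutive γ.signCompat
      τ.signCompat hrank fun e => hne (Sect.ext_of_perm_eq e))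
  have hγσ : sectLe b hbt hbf γ (γ.resolve h d hadm) := (sectLe_iff hbt hbf _ _).2
    fun a y hay => by rw [Sect.cornerRank_resolve hadm hay]; exact Nat.le_add_right _ _
  have hστ : sectLe b hbt hbf (γ.resolve h d hadm) τ := (sectLe_iff hbt hbf _ _).2
    fun a y hay => by
      rw [Sect.cornerRank_resolve hadm hay]
      split_ifs with hR
      · exact hgap a y hay hR
      · exact hrank a y hay
  obtain rfl : γ.resolve h d hadm = τ :=
    by_contra fun hστ' => hcov ⟨_, ⟨hγσ, Sect.ne_resolve hadm⟩, hστ, hστ'⟩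
  exact ⟨γ.2.trans (γ.resolve h d hadm).2.symm, Sect.moves_resolve hadm hfree⟩
end

section
/- The underlying involution map is monotone with respect to lengths along clan covering moves: each of the five sect covering moves (−+ → 11; −11 → 1−1; 11+ → 1+1; 1212 → 1221; 1122 → 1+−1) applied at a free rise increases the length of the underlying involution ℓ(π) = (inv(π) + exc(π))/2 by exactly 1. -/
/-- The inversion number of a permutation. -/
def invCount {n : ℕ} (π : Equiv.Perm (Fin n)) : ℕ :=
  (Finset.univ.filter fun z : Fin n × Fin n => z.1 < z.2 ∧ π z.2 < π z.1).card

/-- The excedance number of a permutation. -/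
def excCount {n : ℕ} (π : Equiv.Perm (Fin n)) : ℕ :=
  (Finset.univ.filter fun i : Fin n => i < π i).card

/-- The length ℓ(π) = (inv(π) + exc(π))/2 of an involution π. -/
def involLength {n : ℕ} (π : Equiv.Perm (Fin n)) : ℕ :=
  (invCount π + excCount π) / 2

namespace ClanMoveAux

lemma invexc_eq {n : ℕ} (σ : Equiv.Perm (Fin n)) :
    ((invCount σ : ℤ) + excCount σ)
      = (∑ p : Fin n × Fin n, if p.1 < p.2 ∧ σ p.2 < σ p.1 then (1:ℤ) else 0)
        + ∑ a : Fin n, if a < σ a then (1:ℤ) else 0 := by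
  unfold invCount excCount
  rw [Finset.card_filter, Finset.card_filter]
  push_cast [apply_ite (Nat.cast : ℕ → ℤ)]
  norm_num

lemma key {n : ℕ} (π τ : Equiv.Perm (Fin n)) (S : Finset (Fin n))
    (hoff : ∀ x, x ∉ S → τ x = π x)
    (hwithin : ((∑ a ∈ S, ∑ b ∈ S,
        ((if a < b ∧ τ b < τ a then (1:ℤ) else 0) - (if a < b ∧ π b < π a then (1:ℤ) else 0)))
      + ∑ a ∈ S, ((if a < τ a then (1:ℤ) else 0) - (if a < π a then (1:ℤ) else 0))) = 2)
    (hcross : ∀ m, m ∉ S → (∑ s ∈ S,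
      (((if s < m ∧ τ m < τ s then (1:ℤ) else 0) - (if s < m ∧ π m < π s then (1:ℤ) else 0))
      + ((if m < s ∧ τ s < τ m then (1:ℤ) else 0) - (if m < s ∧ π s < π m then (1:ℤ) else 0)))) = 0) :
    invCount τ + excCount τ = invCount π + excCount π + 2 := by
  have main : ((invCount τ : ℤ) + excCount τ) = ((invCount π : ℤ) + excCount π) + 2 := by
    rw [invexc_eq, invexc_eq]
    -- abbreviations
    set dI : Fin n × Fin n → ℤ := fun p =>
      (if p.1 < p.2 ∧ τ p.2 < τ p.1 then (1:ℤ) else 0) - (if p.1 < p.2 ∧ π p.2 < π p.1 then (1:ℤ) else 0) with hdI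
    have hd0 : ∀ a ∉ S, ∀ b ∉ S, dI (a, b) = 0 := by
      intro a ha b hb
      simp only [hdI, hoff a ha, hoff b hb, sub_self]
    have hsplit : (∑ p : Fin n × Fin n, dI p)
        = (∑ a ∈ S, ∑ b ∈ S, dI (a, b))
          + ∑ m ∈ Sᶜ, ∑ s ∈ S, (dI (s, m) + dI (m, s)) := by
      rw [Fintype.sum_prod_type]
      have e1 : ∀ a : Fin n, (∑ b : Fin n, dI (a, b))
          = (∑ b ∈ S, dI (a, b)) + ∑ b ∈ Sᶜ, dI (a, b) := by
        intro a; rw [Finset.sum_add_sum_compl]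
      calc (∑ a : Fin n, ∑ b : Fin n, dI (a, b))
          = (∑ a ∈ S, ∑ b : Fin n, dI (a, b)) + ∑ a ∈ Sᶜ, ∑ b : Fin n, dI (a, b) := by
            rw [Finset.sum_add_sum_compl]
        _ = ((∑ a ∈ S, ∑ b ∈ S, dI (a, b)) + ∑ a ∈ S, ∑ b ∈ Sᶜ, dI (a, b))
            + ((∑ a ∈ Sᶜ, ∑ b ∈ S, dI (a, b)) + ∑ a ∈ Sᶜ, ∑ b ∈ Sᶜ, dI (a, b)) := by
            rw [← Finset.sum_add_distrib, ← Finset.sum_add_distrib]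
            simp only [e1]
        _ = (∑ a ∈ S, ∑ b ∈ S, dI (a, b))
            + ((∑ m ∈ Sᶜ, ∑ s ∈ S, dI (s, m)) + ∑ m ∈ Sᶜ, ∑ s ∈ S, dI (m, s)) := by
            rw [Finset.sum_comm (s := S) (t := Sᶜ) (f := fun a b => dI (a, b))]
            have z : (∑ a ∈ Sᶜ, ∑ b ∈ Sᶜ, dI (a, b)) = 0 := by
              apply Finset.sum_eq_zero; intro a ha
              apply Finset.sum_eq_zero; intro b hb
              exact hd0 a (by simpa using ha) b (by simpa using hb)
            rw [z]; ring
        _ = _ := by simp [Finset.sum_add_distrib]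
    have hexc : (∑ a : Fin n, ((if a < τ a then (1:ℤ) else 0) - (if a < π a then (1:ℤ) else 0)))
        = ∑ a ∈ S, ((if a < τ a then (1:ℤ) else 0) - (if a < π a then (1:ℤ) else 0)) := by
      rw [← Finset.sum_add_sum_compl S]
      have z : (∑ a ∈ Sᶜ, ((if a < τ a then (1:ℤ) else 0) - (if a < π a then (1:ℤ) else 0))) = 0 := by
        apply Finset.sum_eq_zero; intro a ha
        rw [hoff a (by simpa using ha), sub_self]
      rw [z, add_zero]
    have hdiff : ((∑ p : Fin n × Fin n, if p.1 < p.2 ∧ τ p.2 < τ p.1 then (1:ℤ) else 0)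
          + ∑ a : Fin n, if a < τ a then (1:ℤ) else 0)
        - ((∑ p : Fin n × Fin n, if p.1 < p.2 ∧ π p.2 < π p.1 then (1:ℤ) else 0)
          + ∑ a : Fin n, if a < π a then (1:ℤ) else 0) = 2 := by
      have : ((∑ p : Fin n × Fin n, if p.1 < p.2 ∧ τ p.2 < τ p.1 then (1:ℤ) else 0)
            - ∑ p : Fin n × Fin n, if p.1 < p.2 ∧ π p.2 < π p.1 then (1:ℤ) else 0)
          = ∑ p : Fin n × Fin n, dI p := by
        rw [← Finset.sum_sub_distrib]
      have hE : ((∑ a : Fin n, if a < τ a then (1:ℤ) else 0)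
            - ∑ a : Fin n, if a < π a then (1:ℤ) else 0)
          = ∑ a : Fin n, ((if a < τ a then (1:ℤ) else 0) - (if a < π a then (1:ℤ) else 0)) := by
        rw [← Finset.sum_sub_distrib]
      have goal2 : (∑ p : Fin n × Fin n, dI p)
          + ∑ a : Fin n, ((if a < τ a then (1:ℤ) else 0) - (if a < π a then (1:ℤ) else 0)) = 2 := by
        rw [hsplit, hexc]
        have z2 : (∑ m ∈ Sᶜ, ∑ s ∈ S, (dI (s, m) + dI (m, s))) = 0 := by
          apply Finset.sum_eq_zero; intro m hm
          exact hcross m (by simpa using hm)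
        rw [z2]
        linarith [hwithin]
      linarith [goal2, this, hE]
    linarith [hdiff]
  exact_mod_cast main

lemma move1_key {n : ℕ} (π τ : Equiv.Perm (Fin n)) (i j : Fin n) (hij : i < j)
    (hfi : π i = i) (hfj : π j = j) (hππ : ∀ x, π (π x) = x)
    (hFR : FreeRise π i j) (hτ : τ = π * Equiv.swap i j) :
    invCount τ + excCount τ = invCount π + excCount π + 2 := by
  have hne : i ≠ j := ne_of_lt hij
  have hτap : ∀ x, τ x = π (Equiv.swap i j x) := by
    intro x; rw [hτ]; rfl
  have hti : τ i = j := by rw [hτap, Equiv.swap_apply_left, hfj]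
  have htj : τ j = i := by rw [hτap, Equiv.swap_apply_right, hfi]
  have hoff : ∀ x, x ∉ ({i, j} : Finset (Fin n)) → τ x = π x := by
    intro x hx
    simp only [Finset.mem_insert, Finset.mem_singleton, not_or] at hx
    rw [hτap, Equiv.swap_apply_of_ne_of_ne hx.1 hx.2]
  apply key π τ {i, j} hoff
  · rw [Finset.sum_pair hne, Finset.sum_pair hne, Finset.sum_pair hne, Finset.sum_pair hne]
    rw [hti, htj, hfi, hfj]
    simp [hij, lt_asymm hij, lt_irrefl]
  · intro m hm
    simp only [Finset.mem_insert, Finset.mem_singleton, not_or] at hm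
    obtain ⟨hmi, hmj⟩ := hm
    have htm : τ m = π m := hoff m (by simp [hmi, hmj])
    have hvi : π m ≠ i := fun h => hmi (by rw [← hππ m, h, hfi])
    have hvj : π m ≠ j := fun h => hmj (by rw [← hππ m, h, hfj])
    have hA : i < m → m < j → ¬ (i < π m ∧ π m < j) := by
      intro h1 h2; have := hFR.2.2 m h1 h2; rw [hfi, hfj] at this; exact this
    have hB : i < π m → π m < j → ¬ (i < m ∧ m < j) := by
      intro h1 h2
      have := hFR.2.2 (π m) h1 h2; rw [hfi, hfj, hππ m] at this; exact this
    rw [Finset.sum_pair hne, hti, htj, hfi, hfj, htm]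
    simp only [Fin.lt_def] at hij hA hB ⊢
    simp only [ne_eq, Fin.ext_iff] at hvi hvj hmi hmj
    split_ifs <;> omega

lemma move2_key {n : ℕ} (π τ : Equiv.Perm (Fin n)) (i k b : Fin n) (hik : i < k)
    (hkb : k < b) (hfi : π i = i) (hπk : π k = b) (hππ : ∀ x, π (π x) = x)
    (hFR : FreeRise π i k) (hτ : τ = Equiv.swap i k * π * Equiv.swap i k) :
    invCount τ + excCount τ = invCount π + excCount π + 2 := by
  have hib : i < b := hik.trans hkb
  have hπb : π b = k := by rw [← hπk, hππ]
  have hτap : ∀ x, τ x = Equiv.swap i k (π (Equiv.swap i k x)) := by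
    intro x; rw [hτ]; rfl
  have hti : τ i = b := by
    rw [hτap, Equiv.swap_apply_left, hπk,
      Equiv.swap_apply_of_ne_of_ne (ne_of_gt hib) (ne_of_gt hkb)]
  have htk : τ k = k := by rw [hτap, Equiv.swap_apply_right, hfi, Equiv.swap_apply_left]
  have htb : τ b = i := by
    rw [hτap, Equiv.swap_apply_of_ne_of_ne (ne_of_gt hib) (ne_of_gt hkb), hπb,
      Equiv.swap_apply_right]
  have hSexpand : ({i, k, b} : Finset (Fin n)) = insert i (insert k {b}) := rfl
  have h1 : i ∉ (insert k {b} : Finset (Fin n)) := by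
    simp [ne_of_lt hik, ne_of_lt hib]
  have h2 : k ∉ ({b} : Finset (Fin n)) := by simp [ne_of_lt hkb]
  have hoff : ∀ x, x ∉ ({i, k, b} : Finset (Fin n)) → τ x = π x := by
    intro x hx
    simp only [Finset.mem_insert, Finset.mem_singleton, not_or] at hx
    obtain ⟨hxi, hxk, hxb⟩ := hx
    have hπxi : π x ≠ i := fun h => hxi (by rw [← hππ x, h, hfi])
    have hπxk : π x ≠ k := fun h => hxb (by rw [← hππ x, h, hπk])
    rw [hτap, Equiv.swap_apply_of_ne_of_ne hxi hxk,
      Equiv.swap_apply_of_ne_of_ne hπxi hπxk]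
  apply key π τ {i, k, b} hoff
  · simp only [hSexpand, Finset.sum_insert h1, Finset.sum_insert h2, Finset.sum_singleton]
    rw [hti, htk, htb, hfi, hπk, hπb]
    simp [hik, hkb, hib, lt_asymm hik, lt_asymm hkb, lt_asymm hib]
  · intro m hm
    simp only [Finset.mem_insert, Finset.mem_singleton, not_or] at hm
    obtain ⟨hmi, hmk, hmb⟩ := hm
    have htm : τ m = π m := hoff m (by simp [hmi, hmk, hmb])
    have hvi : π m ≠ i := fun h => hmi (by rw [← hππ m, h, hfi])
    have hvk : π m ≠ k := fun h => hmb (by rw [← hππ m, h, hπk])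
    have hvb : π m ≠ b := fun h => hmk (by rw [← hππ m, h, hπb])
    have hA : i < m → m < k → ¬ (i < π m ∧ π m < b) := by
      intro u1 u2; have := hFR.2.2 m u1 u2; rw [hfi, hπk] at this; exact this
    have hB : i < π m → π m < k → ¬ (i < m ∧ m < b) := by
      intro u1 u2
      have := hFR.2.2 (π m) u1 u2; rw [hfi, hπk, hππ m] at this; exact this
    simp only [hSexpand, Finset.sum_insert h1, Finset.sum_insert h2, Finset.sum_singleton]
    rw [hti, htk, htb, hfi, hπk, hπb, htm]
    rcases lt_trichotomy m k with hr | hr | hr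
    · have hr2 : m < b := hr.trans hkb
      simp only [hr, hr2, lt_asymm hr, lt_asymm hr2, true_and, false_and, if_true, if_false,
        and_true, and_false]
      simp only [Fin.lt_def] at hik hkb hib hA hB ⊢
      simp only [ne_eq, Fin.ext_iff] at hvi hvk hvb hmi hmk hmb
      split_ifs <;> omega
    · exact absurd hr hmk
    · have hr2 : i < m := hik.trans hr
      simp only [hr, hr2, lt_asymm hr, lt_asymm hr2, true_and, false_and, if_true, if_false,
        and_true, and_false]
      simp only [Fin.lt_def] at hik hkb hib hA hB ⊢
      simp only [ne_eq, Fin.ext_iff] at hvi hvk hvb hmi hmk hmb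
      split_ifs <;> omega

lemma move3_key {n : ℕ} (π τ : Equiv.Perm (Fin n)) (k b j : Fin n) (hkb : k < b)
    (hbj : b < j) (hπk : π k = b) (hfj : π j = j) (hππ : ∀ x, π (π x) = x)
    (hFR : FreeRise π k j) (hτ : τ = Equiv.swap b j * π * Equiv.swap b j) :
    invCount τ + excCount τ = invCount π + excCount π + 2 := by
  have hkj : k < j := hkb.trans hbj
  have hπb : π b = k := by rw [← hπk, hππ]
  have hτap : ∀ x, τ x = Equiv.swap b j (π (Equiv.swap b j x)) := by
    intro x; rw [hτ]; rfl
  have htk : τ k = j := by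
    rw [hτap, Equiv.swap_apply_of_ne_of_ne (ne_of_lt hkb) (ne_of_lt hkj), hπk,
      Equiv.swap_apply_left]
  have htb : τ b = b := by rw [hτap, Equiv.swap_apply_left, hfj, Equiv.swap_apply_right]
  have htj : τ j = k := by
    rw [hτap, Equiv.swap_apply_right, hπb,
      Equiv.swap_apply_of_ne_of_ne (ne_of_lt hkb) (ne_of_lt hkj)]
  have hSexpand : ({k, b, j} : Finset (Fin n)) = insert k (insert b {j}) := rfl
  have h1 : k ∉ (insert b {j} : Finset (Fin n)) := by
    simp [ne_of_lt hkb, ne_of_lt hkj]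
  have h2 : b ∉ ({j} : Finset (Fin n)) := by simp [ne_of_lt hbj]
  have hoff : ∀ x, x ∉ ({k, b, j} : Finset (Fin n)) → τ x = π x := by
    intro x hx
    simp only [Finset.mem_insert, Finset.mem_singleton, not_or] at hx
    obtain ⟨hxk, hxb, hxj⟩ := hx
    have hπxb : π x ≠ b := fun h => hxk (by rw [← hππ x, h, hπb])
    have hπxj : π x ≠ j := fun h => hxj (by rw [← hππ x, h, hfj])
    rw [hτap, Equiv.swap_apply_of_ne_of_ne hxb hxj,
      Equiv.swap_apply_of_ne_of_ne hπxb hπxj]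
  apply key π τ {k, b, j} hoff
  · simp only [hSexpand, Finset.sum_insert h1, Finset.sum_insert h2, Finset.sum_singleton]
    rw [htk, htb, htj, hπk, hπb, hfj]
    simp [hkb, hbj, hkj, lt_asymm hkb, lt_asymm hbj, lt_asymm hkj]
  · intro m hm
    simp only [Finset.mem_insert, Finset.mem_singleton, not_or] at hm
    obtain ⟨hmk, hmb, hmj⟩ := hm
    have htm : τ m = π m := hoff m (by simp [hmk, hmb, hmj])
    have hvk : π m ≠ k := fun h => hmb (by rw [← hππ m, h, hπk])
    have hvb : π m ≠ b := fun h => hmk (by rw [← hππ m, h, hπb])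
    have hvj : π m ≠ j := fun h => hmj (by rw [← hππ m, h, hfj])
    have hA : k < m → m < j → ¬ (b < π m ∧ π m < j) := by
      intro u1 u2; have := hFR.2.2 m u1 u2; rw [hπk, hfj] at this; exact this
    have hB : k < π m → π m < j → ¬ (b < m ∧ m < j) := by
      intro u1 u2
      have := hFR.2.2 (π m) u1 u2; rw [hπk, hfj, hππ m] at this; exact this
    simp only [hSexpand, Finset.sum_insert h1, Finset.sum_insert h2, Finset.sum_singleton]
    rw [htk, htb, htj, hπk, hπb, hfj, htm]
    rcases lt_trichotomy m b with hr | hr | hr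
    · have hr2 : m < j := hr.trans hbj
      simp only [hr, hr2, lt_asymm hr, lt_asymm hr2, true_and, false_and, if_true, if_false,
        and_true, and_false]
      simp only [Fin.lt_def] at hkb hbj hkj hA hB ⊢
      simp only [ne_eq, Fin.ext_iff] at hvk hvb hvj hmk hmb hmj
      split_ifs <;> omega
    · exact absurd hr hmb
    · have hr2 : k < m := hkb.trans hr
      simp only [hr, hr2, lt_asymm hr, lt_asymm hr2, true_and, false_and, if_true, if_false,
        and_true, and_false]
      simp only [Fin.lt_def] at hkb hbj hkj hA hB ⊢
      simp only [ne_eq, Fin.ext_iff] at hvk hvb hvj hmk hmb hmj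
      split_ifs <;> omega

set_option maxHeartbeats 3200000 in
lemma move4_key {n : ℕ} (π τ : Equiv.Perm (Fin n)) (k₁ k₂ b₁ b₂ : Fin n)
    (h12 : k₁ < k₂) (h2b : k₂ < b₁) (hbb : b₁ < b₂)
    (hπ1 : π k₁ = b₁) (hπ2 : π k₂ = b₂) (hππ : ∀ x, π (π x) = x)
    (hFR : FreeRise π k₁ k₂) (hτ : τ = Equiv.swap b₁ b₂ * π * Equiv.swap b₁ b₂) :
    invCount τ + excCount τ = invCount π + excCount π + 2 := by
  have h1b : k₁ < b₁ := h12.trans h2b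
  have h1b2 : k₁ < b₂ := h1b.trans hbb
  have h2b2 : k₂ < b₂ := h2b.trans hbb
  have hπb1 : π b₁ = k₁ := by rw [← hπ1, hππ]
  have hπb2 : π b₂ = k₂ := by rw [← hπ2, hππ]
  have hτap : ∀ x, τ x = Equiv.swap b₁ b₂ (π (Equiv.swap b₁ b₂ x)) := by
    intro x; rw [hτ]; rfl
  have ht1 : τ k₁ = b₂ := by
    rw [hτap, Equiv.swap_apply_of_ne_of_ne (ne_of_lt h1b) (ne_of_lt h1b2), hπ1,
      Equiv.swap_apply_left]
  have ht2 : τ k₂ = b₁ := by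
    rw [hτap, Equiv.swap_apply_of_ne_of_ne (ne_of_lt h2b) (ne_of_lt h2b2), hπ2,
      Equiv.swap_apply_right]
  have htb1 : τ b₁ = k₂ := by
    rw [hτap, Equiv.swap_apply_left, hπb2,
      Equiv.swap_apply_of_ne_of_ne (ne_of_lt h2b) (ne_of_lt h2b2)]
  have htb2 : τ b₂ = k₁ := by
    rw [hτap, Equiv.swap_apply_right, hπb1,
      Equiv.swap_apply_of_ne_of_ne (ne_of_lt h1b) (ne_of_lt h1b2)]
  have hSexpand : ({k₁, k₂, b₁, b₂} : Finset (Fin n))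
      = insert k₁ (insert k₂ (insert b₁ {b₂})) := rfl
  have h1 : k₁ ∉ (insert k₂ (insert b₁ {b₂}) : Finset (Fin n)) := by
    simp [ne_of_lt h12, ne_of_lt h1b, ne_of_lt h1b2]
  have h2 : k₂ ∉ (insert b₁ {b₂} : Finset (Fin n)) := by
    simp [ne_of_lt h2b, ne_of_lt h2b2]
  have h3 : b₁ ∉ ({b₂} : Finset (Fin n)) := by simp [ne_of_lt hbb]
  have hoff : ∀ x, x ∉ ({k₁, k₂, b₁, b₂} : Finset (Fin n)) → τ x = π x := by
    intro x hx
    simp only [Finset.mem_insert, Finset.mem_singleton, not_or] at hx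
    obtain ⟨hx1, hx2, hx3, hx4⟩ := hx
    have hπx1 : π x ≠ b₁ := fun h => hx1 (by rw [← hππ x, h, hπb1])
    have hπx2 : π x ≠ b₂ := fun h => hx2 (by rw [← hππ x, h, hπb2])
    rw [hτap, Equiv.swap_apply_of_ne_of_ne hx3 hx4,
      Equiv.swap_apply_of_ne_of_ne hπx1 hπx2]
  apply key π τ {k₁, k₂, b₁, b₂} hoff
  · simp only [hSexpand, Finset.sum_insert h1, Finset.sum_insert h2, Finset.sum_insert h3,
      Finset.sum_singleton]
    rw [ht1, ht2, htb1, htb2, hπ1, hπ2, hπb1, hπb2]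
    simp [h12, h2b, hbb, h1b, h1b2, h2b2, lt_asymm h12, lt_asymm h2b, lt_asymm hbb,
      lt_asymm h1b, lt_asymm h1b2, lt_asymm h2b2]
  · intro m hm
    simp only [Finset.mem_insert, Finset.mem_singleton, not_or] at hm
    obtain ⟨hm1, hm2, hm3, hm4⟩ := hm
    have htm : τ m = π m := hoff m (by simp [hm1, hm2, hm3, hm4])
    have hv1 : π m ≠ k₁ := fun h => hm3 (by rw [← hππ m, h, hπ1])
    have hv2 : π m ≠ k₂ := fun h => hm4 (by rw [← hππ m, h, hπ2])
    have hv3 : π m ≠ b₁ := fun h => hm1 (by rw [← hππ m, h, hπb1])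
    have hv4 : π m ≠ b₂ := fun h => hm2 (by rw [← hππ m, h, hπb2])
    have hA : k₁ < m → m < k₂ → ¬ (b₁ < π m ∧ π m < b₂) := by
      intro u1 u2; have := hFR.2.2 m u1 u2; rw [hπ1, hπ2] at this; exact this
    have hB : k₁ < π m → π m < k₂ → ¬ (b₁ < m ∧ m < b₂) := by
      intro u1 u2
      have := hFR.2.2 (π m) u1 u2; rw [hπ1, hπ2, hππ m] at this; exact this
    simp only [hSexpand, Finset.sum_insert h1, Finset.sum_insert h2, Finset.sum_insert h3,
      Finset.sum_singleton]
    rw [ht1, ht2, htb1, htb2, hπ1, hπ2, hπb1, hπb2, htm]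
    simp only [Fin.lt_def] at h12 h2b hbb h1b h1b2 h2b2 hA hB ⊢
    simp only [ne_eq, Fin.ext_iff] at hv1 hv2 hv3 hv4 hm1 hm2 hm3 hm4
    rcases Nat.lt_trichotomy (m : ℕ) (k₂ : ℕ) with hr | hr | hr
    · rcases Nat.lt_trichotomy (m : ℕ) (k₁ : ℕ) with hq | hq | hq
      · have e2 : (m:ℕ) < b₁ := by omega
        have e3 : (m:ℕ) < b₂ := by omega
        simp only [hq, hr, e2, e3, Nat.lt_asymm hq, Nat.lt_asymm hr, Nat.lt_asymm e2,
          Nat.lt_asymm e3, true_and, false_and, if_true, if_false, and_true, and_false]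
        split_ifs <;> omega
      · exact absurd hq hm1
      · have e2 : (m:ℕ) < b₁ := by omega
        have e3 : (m:ℕ) < b₂ := by omega
        simp only [hq, hr, e2, e3, Nat.lt_asymm hq, Nat.lt_asymm hr, Nat.lt_asymm e2,
          Nat.lt_asymm e3, true_and, false_and, if_true, if_false, and_true, and_false]
        split_ifs <;> omega
    · exact absurd hr hm2
    · rcases Nat.lt_trichotomy (m : ℕ) (b₁ : ℕ) with hq | hq | hq
      · have e2 : (k₁:ℕ) < m := by omega
        have e3 : (m:ℕ) < b₂ := by omega
        simp only [hq, hr, e2, e3, Nat.lt_asymm hq, Nat.lt_asymm hr, Nat.lt_asymm e2,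
          Nat.lt_asymm e3, true_and, false_and, if_true, if_false, and_true, and_false]
        split_ifs <;> omega
      · exact absurd hq hm3
      · rcases Nat.lt_trichotomy (m : ℕ) (b₂ : ℕ) with hp | hp | hp
        · have e2 : (k₁:ℕ) < m := by omega
          simp only [hp, hq, hr, e2, Nat.lt_asymm hp, Nat.lt_asymm hq, Nat.lt_asymm hr,
            Nat.lt_asymm e2, true_and, false_and, if_true, if_false, and_true, and_false]
          split_ifs <;> omega
        · exact absurd hp hm4
        · have e2 : (k₁:ℕ) < m := by omega
          simp only [hp, hq, hr, e2, Nat.lt_asymm hp, Nat.lt_asymm hq, Nat.lt_asymm hr,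
            Nat.lt_asymm e2, true_and, false_and, if_true, if_false, and_true, and_false]
          split_ifs <;> omega

lemma move5_key {n : ℕ} (π τ : Equiv.Perm (Fin n)) (k₁ b₁ k₂ b₂ : Fin n)
    (h1b : k₁ < b₁) (hbk : b₁ < k₂) (h2b : k₂ < b₂)
    (hπ1 : π k₁ = b₁) (hπ2 : π k₂ = b₂) (hππ : ∀ x, π (π x) = x)
    (hFR : FreeRise π k₁ k₂)
    (hτ : τ = π * Equiv.swap k₁ b₁ * Equiv.swap k₂ b₂ * Equiv.swap k₁ b₂) :
    invCount τ + excCount τ = invCount π + excCount π + 2 := by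
  have h12 : k₁ < k₂ := h1b.trans hbk
  have h1b2 : k₁ < b₂ := h12.trans h2b
  have hb1b2 : b₁ < b₂ := hbk.trans h2b
  have hπb1 : π b₁ = k₁ := by rw [← hπ1, hππ]
  have hπb2 : π b₂ = k₂ := by rw [← hπ2, hππ]
  have hτap : ∀ x, τ x
      = π (Equiv.swap k₁ b₁ (Equiv.swap k₂ b₂ (Equiv.swap k₁ b₂ x))) := by
    intro x; rw [hτ]; rfl
  have ht1 : τ k₁ = b₂ := by
    rw [hτap, Equiv.swap_apply_left,
      Equiv.swap_apply_right,
      Equiv.swap_apply_of_ne_of_ne (ne_of_gt h12) (ne_of_gt hbk), hπ2]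
  have htb1 : τ b₁ = b₁ := by
    rw [hτap, Equiv.swap_apply_of_ne_of_ne (ne_of_gt h1b) (ne_of_lt hb1b2),
      Equiv.swap_apply_of_ne_of_ne (ne_of_lt hbk) (ne_of_lt hb1b2),
      Equiv.swap_apply_right, hπ1]
  have ht2 : τ k₂ = k₂ := by
    rw [hτap, Equiv.swap_apply_of_ne_of_ne (ne_of_gt h12) (ne_of_lt h2b),
      Equiv.swap_apply_left,
      Equiv.swap_apply_of_ne_of_ne (ne_of_gt h1b2) (ne_of_gt hb1b2), hπb2]
  have htb2 : τ b₂ = k₁ := by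
    rw [hτap, Equiv.swap_apply_right,
      Equiv.swap_apply_of_ne_of_ne (ne_of_lt h12) (ne_of_lt h1b2),
      Equiv.swap_apply_left, hπb1]
  have hSexpand : ({k₁, b₁, k₂, b₂} : Finset (Fin n))
      = insert k₁ (insert b₁ (insert k₂ {b₂})) := rfl
  have h1 : k₁ ∉ (insert b₁ (insert k₂ {b₂}) : Finset (Fin n)) := by
    simp [ne_of_lt h1b, ne_of_lt h12, ne_of_lt h1b2]
  have h2 : b₁ ∉ (insert k₂ {b₂} : Finset (Fin n)) := by
    simp [ne_of_lt hbk, ne_of_lt hb1b2]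
  have h3 : k₂ ∉ ({b₂} : Finset (Fin n)) := by simp [ne_of_lt h2b]
  have hoff : ∀ x, x ∉ ({k₁, b₁, k₂, b₂} : Finset (Fin n)) → τ x = π x := by
    intro x hx
    simp only [Finset.mem_insert, Finset.mem_singleton, not_or] at hx
    obtain ⟨hx1, hx2, hx3, hx4⟩ := hx
    rw [hτap, Equiv.swap_apply_of_ne_of_ne hx1 hx4,
      Equiv.swap_apply_of_ne_of_ne hx3 hx4, Equiv.swap_apply_of_ne_of_ne hx1 hx2]
  apply key π τ {k₁, b₁, k₂, b₂} hoff
  · simp only [hSexpand, Finset.sum_insert h1, Finset.sum_insert h2, Finset.sum_insert h3,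
      Finset.sum_singleton]
    rw [ht1, ht2, htb1, htb2, hπ1, hπ2, hπb1, hπb2]
    simp [h1b, hbk, h2b, h12, h1b2, hb1b2, lt_asymm h1b, lt_asymm hbk, lt_asymm h2b,
      lt_asymm h12, lt_asymm h1b2, lt_asymm hb1b2]
  · intro m hm
    simp only [Finset.mem_insert, Finset.mem_singleton, not_or] at hm
    obtain ⟨hm1, hm2, hm3, hm4⟩ := hm
    have htm : τ m = π m := hoff m (by simp [hm1, hm2, hm3, hm4])
    have hv1 : π m ≠ k₁ := fun h => hm2 (by rw [← hππ m, h, hπ1])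
    have hv2 : π m ≠ b₁ := fun h => hm1 (by rw [← hππ m, h, hπb1])
    have hv3 : π m ≠ k₂ := fun h => hm4 (by rw [← hππ m, h, hπ2])
    have hv4 : π m ≠ b₂ := fun h => hm3 (by rw [← hππ m, h, hπb2])
    have hA : k₁ < m → m < k₂ → ¬ (b₁ < π m ∧ π m < b₂) := by
      intro u1 u2; have := hFR.2.2 m u1 u2; rw [hπ1, hπ2] at this; exact this
    have hB : k₁ < π m → π m < k₂ → ¬ (b₁ < m ∧ m < b₂) := by
      intro u1 u2
      have := hFR.2.2 (π m) u1 u2; rw [hπ1, hπ2, hππ m] at this; exact this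
    simp only [hSexpand, Finset.sum_insert h1, Finset.sum_insert h2, Finset.sum_insert h3,
      Finset.sum_singleton]
    rw [ht1, ht2, htb1, htb2, hπ1, hπ2, hπb1, hπb2, htm]
    simp only [Fin.lt_def] at h1b hbk h2b h12 h1b2 hb1b2 hA hB ⊢
    simp only [ne_eq, Fin.ext_iff] at hv1 hv2 hv3 hv4 hm1 hm2 hm3 hm4
    rcases Nat.lt_trichotomy (m : ℕ) (b₁ : ℕ) with hr | hr | hr
    · rcases Nat.lt_trichotomy (m : ℕ) (k₁ : ℕ) with hq | hq | hq
      · have e2 : (m:ℕ) < k₂ := by omega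
        have e3 : (m:ℕ) < b₂ := by omega
        simp only [hq, hr, e2, e3, Nat.lt_asymm hq, Nat.lt_asymm hr, Nat.lt_asymm e2,
          Nat.lt_asymm e3, true_and, false_and, if_true, if_false, and_true, and_false]
        split_ifs <;> omega
      · exact absurd hq hm1
      · have e2 : (m:ℕ) < k₂ := by omega
        have e3 : (m:ℕ) < b₂ := by omega
        simp only [hq, hr, e2, e3, Nat.lt_asymm hq, Nat.lt_asymm hr, Nat.lt_asymm e2,
          Nat.lt_asymm e3, true_and, false_and, if_true, if_false, and_true, and_false]
        split_ifs <;> omega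
    · exact absurd hr hm2
    · rcases Nat.lt_trichotomy (m : ℕ) (k₂ : ℕ) with hq | hq | hq
      · have e2 : (k₁:ℕ) < m := by omega
        have e3 : (m:ℕ) < b₂ := by omega
        simp only [hq, hr, e2, e3, Nat.lt_asymm hq, Nat.lt_asymm hr, Nat.lt_asymm e2,
          Nat.lt_asymm e3, true_and, false_and, if_true, if_false, and_true, and_false]
        split_ifs <;> omega
      · exact absurd hq hm3
      · rcases Nat.lt_trichotomy (m : ℕ) (b₂ : ℕ) with hp | hp | hp
        · have e2 : (k₁:ℕ) < m := by omega
          simp only [hp, hq, hr, e2, Nat.lt_asymm hp, Nat.lt_asymm hq, Nat.lt_asymm hr,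
            Nat.lt_asymm e2, true_and, false_and, if_true, if_false, and_true, and_false]
          split_ifs <;> omega
        · exact absurd hp hm4
        · have e2 : (k₁:ℕ) < m := by omega
          simp only [hp, hq, hr, e2, Nat.lt_asymm hp, Nat.lt_asymm hq, Nat.lt_asymm hr,
            Nat.lt_asymm e2, true_and, false_and, if_true, if_false, and_true, and_false]
          split_ifs <;> omega

end ClanMoveAux

/-- Each of the five sect covering moves (−+ → 11; −11 → 1−1; 11+ → 1+1;
1212 → 1221; 1122 → 1+−1), applied at a free rise, increases the length
ℓ(π) = (inv(π) + exc(π))/2 of the underlying involution by exactly 1. -/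
theorem moves_increase_involution_length_by_one {n : ℕ} (γ τ : Clan n)
    (h : Move1 γ τ ∨ Move2 γ τ ∨ Move3 γ τ ∨ Move4 γ τ ∨ Move5 γ τ) :
    involLength τ.1.1 = involLength γ.1.1 + 1 := by
  have hππ : ∀ x, γ.1.1 (γ.1.1 x) = x := fun x => by
    have h1 := γ.2.1
    calc γ.1.1 (γ.1.1 x) = (γ.1.1 * γ.1.1) x := rfl
      _ = x := by rw [h1]; rfl
  suffices hk : invCount τ.1.1 + excCount τ.1.1 = invCount γ.1.1 + excCount γ.1.1 + 2 by
    unfold involLength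
    omega
  rcases h with h | h | h | h | h
  · obtain ⟨i, j, hij, hfi, hfj, -, -, hFR, hτ, -⟩ := h
    exact ClanMoveAux.move1_key _ _ i j hij hfi hfj hππ hFR hτ
  · obtain ⟨i, k, hik, hfi, -, hkb, hFR, hτ, -, -⟩ := h
    exact ClanMoveAux.move2_key _ _ i k (γ.1.1 k) hik hkb hfi rfl hππ hFR hτ
  · obtain ⟨k, j, hkb, hbj, hfj, -, hFR, hτ, -, -⟩ := h
    exact ClanMoveAux.move3_key _ _ k (γ.1.1 k) j hkb hbj rfl hfj hππ hFR hτ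
  · obtain ⟨k₁, k₂, h12, h2b, hbb, hFR, hτ, -⟩ := h
    exact ClanMoveAux.move4_key _ _ k₁ k₂ (γ.1.1 k₁) (γ.1.1 k₂) h12 h2b hbb rfl rfl hππ hFR hτ
  · obtain ⟨k₁, k₂, h1b, hbk, h2b, hFR, hτ, -, -, -⟩ := h
    exact ClanMoveAux.move5_key _ _ k₁ (γ.1.1 k₁) k₂ (γ.1.1 k₂) h1b hbk h2b rfl rfl hππ hFR hτ
end
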